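/- arXiv:1903.10331 — 5 statements merged into one kernel-verified Lean document; each statement's English description precedes it below -/
import Mathlib

section
/- Let ∥ be a Clifford-like parallelism and let α₁ be a ring automorphism of H that preserves ∥. Then: (a) every ring automorphism α of H whose restriction to F·1 agrees with the restriction of α₁ to F·1 preserves ∥; (b) no ring antiautomorphism α of H (additive bijection with α(1) = 1 and α(x·y) = α(y)·α(x) for all x, y) whose restriction to F·1 agrees with the restriction of α₁ to F·1 preserves ∥. -/
variable (F H : Type*) [Field F] [DivisionRing H] [Algebra F H]

/-- A *line* of the projective space `ℙ(H_F)`: a 2-dimensional `F`-subspace of `H`. -/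
abbrev Line := {M : Submodule F H // Module.finrank F M = 2}

/-- `M ∥ℓ N` : there is `g ≠ 0` with `N = g·M`. -/
def LeftPar (M N : Submodule F H) : Prop :=
  ∃ g : H, g ≠ 0 ∧ (N : Set H) = (fun m => g * m) '' (M : Set H)

/-- `M ∥r N` : there is `g ≠ 0` with `N = M·g`. -/
def RightPar (M N : Submodule F H) : Prop :=
  ∃ g : H, g ≠ 0 ∧ (N : Set H) = (fun m => m * g) '' (M : Set H)

/-- The left parallel class `Sℓ(M) = {N | N ∥ℓ M}`. -/
def leftClass (M : Line F H) : Set (Line F H) := {N | LeftPar F H N.1 M.1}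

/-- The right parallel class `Sr(M) = {N | N ∥r M}`. -/
def rightClass (M : Line F H) : Set (Line F H) := {N | RightPar F H N.1 M.1}

/-- The `∥`-class `S(M) = {N | N ∥ M}`. -/
def parClass (par : Line F H → Line F H → Prop) (M : Line F H) : Set (Line F H) :=
  {N | par N M}

/-- A parallelism: an equivalence relation on lines such that for every `x ≠ 0`
and every line `M` there is exactly one line `N` with `x ∈ N` and `N ∥ M`. -/
def IsParallelism (par : Line F H → Line F H → Prop) : Prop :=
  Equivalence par ∧
    ∀ x : H, x ≠ 0 → ∀ M : Line F H, ∃! N : Line F H, x ∈ N.1 ∧ par N M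

/-- A Clifford-like parallelism: every `∥`-class is a left or a right parallel class. -/
def IsCliffordLike (par : Line F H → Line F H → Prop) : Prop :=
  IsParallelism F H par ∧
    ∀ M : Line F H,
      parClass F H par M = leftClass F H M ∨ parClass F H par M = rightClass F H M

/-- The star `𝒜` of lines through `F·1`, i.e. the lines containing `1`. -/
def starLines : Set (Line F H) := {L | (1 : H) ∈ L.1}

/-- The set `ℱ` of lines of `𝒜` whose `∥`-class is a left parallel class. -/
def calF (par : Line F H → Line F H → Prop) : Set (Line F H) :=
  {L | (1 : H) ∈ L.1 ∧ parClass F H par L = leftClass F H L}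

/-- A semilinear bijection of `H` (over some field automorphism of `F`). -/
def IsSemilinear (β : H → H) : Prop :=
  Function.Bijective β ∧ (∀ x y : H, β (x + y) = β x + β y) ∧
    ∃ σ : F ≃+* F, ∀ (a : F) (x : H), β (a • x) = σ a • β x

/-- `β` preserves the parallelism `par`: for all lines `M, N`,
`M ∥ N ↔ β(M) ∥ β(N)`, where `β(M)` denotes the line whose carrier is `β '' M`. -/
def Preserves (β : H → H) (par : Line F H → Line F H → Prop) : Prop :=
  ∀ M N M' N' : Line F H,
    (M'.1 : Set H) = β '' (M.1 : Set H) →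
    (N'.1 : Set H) = β '' (N.1 : Set H) →
    (par M N ↔ par M' N')

/-- The image `β(𝒢)` of a set of lines under `β`. -/
def imageLines (β : H → H) (G : Set (Line F H)) : Set (Line F H) :=
  {L' | ∃ L ∈ G, (L'.1 : Set H) = β '' (L.1 : Set H)}

/-- The centre of `H` is exactly `F·1`. -/
def CenterEqF : Prop :=
  ∀ z : H, (∀ x : H, z * x = x * z) ↔ ∃ a : F, z = algebraMap F H a

/-- Ring automorphism of `H`, as a plain function. -/
def IsRingAutFn (α : H → H) : Prop :=
  Function.Bijective α ∧ (∀ x y : H, α (x + y) = α x + α y) ∧ α 1 = 1 ∧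
    ∀ x y : H, α (x * y) = α x * α y

/-- Ring antiautomorphism of `H`, as a plain function. -/
def IsRingAntiAutFn (α : H → H) : Prop :=
  Function.Bijective α ∧ (∀ x y : H, α (x + y) = α x + α y) ∧ α 1 = 1 ∧
    ∀ x y : H, α (x * y) = α y * α x

/-! ### Auxiliary lemmas -/

namespace CliffordAux

variable {F H : Type*} [Field F] [DivisionRing H] [Algebra F H]

lemma fd (hdim : Module.finrank F H = 4) : FiniteDimensional F H :=
  Module.finite_of_finrank_pos (by omega)

lemma central_mem (hcenter : CenterEqF F H) {z : H} (hz : ∀ x : H, z * x = x * z) :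
    z ∈ Submodule.span F {(1 : H)} := by
  obtain ⟨a, rfl⟩ := (hcenter z).mp hz
  exact Submodule.mem_span_singleton.mpr ⟨a, by rw [Algebra.algebraMap_eq_smul_one]⟩

/-- A vector space is not the union of two proper subspaces. -/
lemma two_cover (C C' : Submodule F H) (h : ∀ y : H, y ∈ C ∨ y ∈ C') :
    (∀ y : H, y ∈ C) ∨ (∀ y : H, y ∈ C') := by
  by_contra hcon
  push_neg at hcon
  obtain ⟨⟨x, hx⟩, ⟨y, hy⟩⟩ := hcon
  have hxC' : x ∈ C' := (h x).resolve_left hx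
  have hyC : y ∈ C := (h y).resolve_right hy
  rcases h (x + y) with hxy | hxy
  · exact hx (by simpa using C.sub_mem hxy hyC)
  · exact hy (by simpa using C'.sub_mem hxy hxC')

lemma pair_indep {u v : H} (hu : u ≠ 0) (hv : v ∉ Submodule.span F {u}) :
    LinearIndependent F ![u, v] := by
  have huv : u ∉ Submodule.span F (Set.range ![v]) := by
    intro hmem
    have : Set.range ![v] = {v} := by
      simp [Matrix.range_cons, Matrix.range_empty]
    rw [this] at hmem
    obtain ⟨a, ha⟩ := Submodule.mem_span_singleton.mp hmem
    have ha0 : a ≠ 0 := by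
      rintro rfl; rw [zero_smul] at ha; exact hu ha.symm
    exact hv (Submodule.mem_span_singleton.mpr ⟨a⁻¹, by rw [← ha, smul_smul, inv_mul_cancel₀ ha0, one_smul]⟩)
  have hv0 : LinearIndependent F ![v] := by
    refine linearIndependent_unique_iff.mpr ?_
    simp only [Matrix.cons_val_fin_one]
    intro h0
    exact hv (h0 ▸ Submodule.zero_mem _)
  exact linearIndependent_fin_cons.mpr ⟨hv0, huv⟩

lemma range_pair (u v : H) : Set.range ![u, v] = {u, v} := by
  have h : Set.range ![u, v] = {v, u} := by simp [Matrix.range_cons, Matrix.range_empty]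
  rw [h, Set.pair_comm]

lemma finrank_span_pair {u v : H} (hu : u ≠ 0) (hv : v ∉ Submodule.span F {u}) :
    Module.finrank F (Submodule.span F {u, v}) = 2 := by
  have h := finrank_span_eq_card (R := F) (pair_indep hu hv)
  rw [range_pair] at h
  simpa using h

lemma span_mul_closed (s : Set H)
    (h : ∀ x ∈ s, ∀ y ∈ s, x * y ∈ Submodule.span F s) :
    ∀ a ∈ Submodule.span F s, ∀ b ∈ Submodule.span F s, a * b ∈ Submodule.span F s := by
  have step : ∀ x ∈ s, ∀ b ∈ Submodule.span F s, x * b ∈ Submodule.span F s := by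
    intro x hx b hb
    induction hb using Submodule.span_induction with
    | mem y hy => exact h x hx y hy
    | zero => simpa using Submodule.zero_mem _
    | add y z _ _ hy hz => rw [mul_add]; exact Submodule.add_mem _ hy hz
    | smul c y _ hy => rw [mul_smul_comm]; exact Submodule.smul_mem _ _ hy
  intro a ha b hb
  induction ha using Submodule.span_induction with
  | mem x hx => exact step x hx b hb
  | zero => simpa using Submodule.zero_mem _
  | add y z _ _ hy hz => rw [add_mul]; exact Submodule.add_mem _ hy hz
  | smul c y _ hy => rw [smul_mul_assoc]; exact Submodule.smul_mem _ _ hy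

/-- In a multiplicatively closed subspace of dimension at most 3 containing 1,
inverses of nonzero elements stay inside. -/
lemma inv_mem (hdim : Module.finrank F H = 4) {K : Submodule F H} (h1 : (1:H) ∈ K)
    (hmul : ∀ a ∈ K, ∀ b ∈ K, a * b ∈ K) (hrank : Module.finrank F K ≤ 3) :
    ∀ k ∈ K, k ≠ 0 → k⁻¹ ∈ K := by
  haveI := fd hdim
  intro k hk hk0
  have hk2 : k*k ∈ K := hmul k hk k hk
  have hk3 : (k*k)*k ∈ K := hmul _ hk2 k hk
  have hstep : ∀ w ∈ K, ∀ s : F, s ≠ 0 → k * w = s • (1:H) → k⁻¹ ∈ K := by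
    intro w hw s hs hkw
    have hone : k * (s⁻¹ • w) = 1 := by
      rw [mul_smul_comm, hkw, smul_smul, inv_mul_cancel₀ hs, one_smul]
    rw [inv_eq_of_mul_eq_one_right hone]
    exact Submodule.smul_mem _ _ hw
  have hnind : ¬ LinearIndependent F ![(1:H), k, k*k, (k*k)*k] := by
    intro hind
    have hr := finrank_span_eq_card (R := F) hind
    have hle : Submodule.span F (Set.range ![(1:H), k, k*k, (k*k)*k]) ≤ K := by
      rw [Submodule.span_le]
      rintro z ⟨i, rfl⟩
      fin_cases i
      · simpa using h1
      · simpa using hk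
      · simpa using hk2
      · simpa using hk3
    have hm := Submodule.finrank_mono hle
    rw [hr] at hm
    simp only [Fintype.card_fin] at hm
    omega
  obtain ⟨c, hsum, i, hci⟩ := Fintype.not_linearIndependent_iff.mp hnind
  rw [Fin.sum_univ_four] at hsum
  simp only [Matrix.cons_val_zero, Matrix.cons_val_one, Matrix.head_cons,
    Matrix.cons_val_two, Matrix.cons_val_three, Matrix.tail_cons, Matrix.head_fin_const] at hsum
  set w1 := c 1 • (1:H) + c 2 • k + c 3 • (k*k) with hw1
  have hw1K : w1 ∈ K := Submodule.add_mem _ (Submodule.add_mem _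
    (Submodule.smul_mem _ _ h1) (Submodule.smul_mem _ _ hk)) (Submodule.smul_mem _ _ hk2)
  have hzero1 : k * w1 + c 0 • (1:H) = 0 := by
    rw [hw1, mul_add, mul_add, mul_smul_comm, mul_smul_comm, mul_smul_comm, mul_one, ← mul_assoc]
    rw [← hsum]; abel
  have hkw1 : k * w1 = (- c 0) • (1:H) := by
    rw [neg_smul]; exact eq_neg_of_add_eq_zero_left hzero1
  by_cases hc0 : c 0 = 0
  · have hw10 : w1 = 0 := by
      have h0 : k * w1 = 0 := by rw [hkw1, hc0, neg_zero, zero_smul]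
      rcases mul_eq_zero.mp h0 with h | h
      · exact absurd h hk0
      · exact h
    set w2 := c 2 • (1:H) + c 3 • k with hw2
    have hw2K : w2 ∈ K := Submodule.add_mem _ (Submodule.smul_mem _ _ h1) (Submodule.smul_mem _ _ hk)
    have hzero2 : k * w2 + c 1 • (1:H) = 0 := by
      have he : k * w2 + c 1 • (1:H) = w1 := by
        rw [hw1, hw2, mul_add, mul_smul_comm, mul_smul_comm, mul_one]; abel
      rw [he, hw10]
    have hkw2 : k * w2 = (- c 1) • (1:H) := by
      rw [neg_smul]; exact eq_neg_of_add_eq_zero_left hzero2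
    by_cases hc1 : c 1 = 0
    · have hw20 : w2 = 0 := by
        have h0 : k * w2 = 0 := by rw [hkw2, hc1, neg_zero, zero_smul]
        rcases mul_eq_zero.mp h0 with h | h
        · exact absurd h hk0
        · exact h
      by_cases hc2 : c 2 = 0
      · exfalso
        have hc3 : c 3 = 0 := by
          have h3 : c 3 • k = 0 := by
            have := hw20
            rw [hw2, hc2, zero_smul, zero_add] at this
            exact this
          rcases smul_eq_zero.mp h3 with h | h
          · exact h
          · exact absurd h hk0
        fin_cases i <;> simp_all
      · have hc3 : c 3 ≠ 0 := by
          intro h3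
          apply hc2
          have := hw20
          rw [hw2, h3, zero_smul, add_zero] at this
          rcases smul_eq_zero.mp this with h | h
          · exact h
          · exact absurd h one_ne_zero
        have hc3k : c 3 • k = (- c 2) • (1:H) := by
          rw [neg_smul]
          exact eq_neg_of_add_eq_zero_left (by rw [add_comm]; rw [hw2] at hw20; exact hw20)
        have hk1 : k = ((- c 2) / c 3) • (1:H) := by
          calc k = (c 3)⁻¹ • (c 3 • k) := by rw [smul_smul, inv_mul_cancel₀ hc3, one_smul]
            _ = (c 3)⁻¹ • ((- c 2) • (1:H)) := by rw [hc3k]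
            _ = ((- c 2) / c 3) • (1:H) := by rw [smul_smul, div_eq_inv_mul]
        have he : (- c 2) / c 3 ≠ 0 := div_ne_zero (neg_ne_zero.mpr hc2) hc3
        have hone : k * (((- c 2) / c 3)⁻¹ • (1:H)) = 1 := by
          rw [hk1, smul_mul_assoc, mul_smul_comm, smul_smul, one_mul,
            mul_inv_cancel₀ he, one_smul]
        rw [inv_eq_of_mul_eq_one_right hone]
        exact Submodule.smul_mem _ _ h1
    · exact hstep w2 hw2K (- c 1) (neg_ne_zero.mpr hc1) hkw2
  · exact hstep w1 hw1K (- c 0) (neg_ne_zero.mpr hc0) hkw1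

/-- Dickson-type theorem: two roots of the same quadratic are conjugate. -/
lemma root_conj (hcenter : CenterEqF F H) (hdim : Module.finrank F H = 4)
    {q q' : H} {t n : F} (hq : q ∉ Submodule.span F {(1 : H)})
    (h1 : q * q = t • q + n • (1 : H)) (h2 : q' * q' = t • q' + n • (1 : H)) :
    ∃ g : H, g ≠ 0 ∧ q' * g = g * q := by
  haveI := fd hdim
  set S : H →ₗ[F] H := LinearMap.mulLeft F q' - LinearMap.mulRight F q with hS
  have hSapply : ∀ g, S g = q' * g - g * q := fun g => rfl
  by_cases hinj : Function.Injective S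
  · exfalso
    have hsurj := LinearMap.injective_iff_surjective.mp hinj
    have key : ∀ h : H, q' * h + h * q = t • h := by
      intro h
      obtain ⟨g, rfl⟩ := hsurj h
      rw [hSapply]
      calc q' * (q' * g - g * q) + (q' * g - g * q) * q
          = (q' * q') * g - g * (q * q) := by noncomm_ring
        _ = (t • q' + n • (1:H)) * g - g * (t • q + n • (1:H)) := by rw [h1, h2]
        _ = t • (q' * g - g * q) := by
            rw [add_mul, mul_add, smul_mul_assoc, smul_mul_assoc, one_mul,
              mul_smul_comm, mul_smul_comm, mul_one, smul_sub]
            abel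
    have h1' : q' + q = t • (1:H) := by simpa using key 1
    apply hq
    apply central_mem hcenter
    intro x
    have e1 : q' * x + q * x = t • x := by
      rw [← add_mul, h1', smul_mul_assoc, one_mul]
    have e2 : q' * x + x * q = q' * x + q * x := by rw [key x, e1]
    exact (add_left_cancel e2).symm
  · obtain ⟨a, b, hab, hne⟩ := Function.not_injective_iff.mp hinj
    refine ⟨a - b, sub_ne_zero.mpr hne, ?_⟩
    have h0 : S (a - b) = 0 := by rw [map_sub, hab, sub_self]
    rw [hSapply] at h0
    exact sub_eq_zero.mp h0

/-- Every element of `H` satisfies a quadratic equation over `F`. -/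
lemma quad (hcenter : CenterEqF F H) (hdim : Module.finrank F H = 4) (q : H) :
    ∃ t n : F, q * q = t • q + n • (1 : H) := by
  haveI := fd hdim
  by_cases hqq : q * q ∈ Submodule.span F {(1:H), q}
  · obtain ⟨a, b, hab⟩ := Submodule.mem_span_pair.mp hqq
    exact ⟨b, a, by rw [← hab]; abel⟩
  · exfalso
    have h1 : (1:H) ≠ 0 := one_ne_zero
    have hq1 : q ∉ Submodule.span F {(1:H)} := by
      intro hmem
      obtain ⟨a, ha⟩ := Submodule.mem_span_singleton.mp hmem
      apply hqq
      rw [← ha]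
      have he : (a • (1:H)) * (a • (1:H)) = (a*a) • (1:H) := by
        rw [smul_mul_assoc, mul_smul_comm, one_mul, smul_smul]
      rw [he]
      exact Submodule.smul_mem _ _ (Submodule.subset_span (by simp))
    have hpair : Set.range ![(1:H), q] = {(1:H), q} := range_pair _ _
    have hind2 : LinearIndependent F ![(1:H), q] := pair_indep h1 hq1
    have hsnoc : ![(1:H), q, q*q] = Fin.snoc ![(1:H), q] (q*q) := by
      funext i; fin_cases i <;> rfl
    have hind3 : LinearIndependent F ![(1:H), q, q*q] := by
      rw [hsnoc, linearIndependent_fin_snoc]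
      exact ⟨hind2, by rw [hpair]; exact hqq⟩
    set K := Submodule.span F {(1:H), q, q*q} with hK
    have hrange3 : Set.range ![(1:H), q, q*q] = {(1:H), q, q*q} := by
      ext z
      simp only [Set.mem_range, Set.mem_insert_iff, Set.mem_singleton_iff]
      constructor
      · rintro ⟨i, rfl⟩; fin_cases i <;> simp
      · rintro (rfl | rfl | rfl)
        exacts [⟨0, rfl⟩, ⟨1, rfl⟩, ⟨2, rfl⟩]
    have h1mem : (1:H) ∈ K := Submodule.subset_span (by simp)
    have hqmem : q ∈ K := Submodule.subset_span (by simp)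
    have hq2mem : q*q ∈ K := Submodule.subset_span (by simp)
    by_cases hc : (q*q)*q ∈ K
    · -- K = span{1,q,q²} is a 3-dimensional subfield; impossible in dimension 4
      have hfr : Module.finrank F K = 3 := by
        have h := finrank_span_eq_card (R := F) hind3
        rw [hrange3] at h
        simpa using h
      have hstepq : ∀ w ∈ K, w * q ∈ K := by
        intro w hw
        induction hw using Submodule.span_induction with
        | mem y hy =>
          simp only [Set.mem_insert_iff, Set.mem_singleton_iff] at hy
          rcases hy with rfl | rfl | rfl
          · rw [one_mul]; exact hqmem
          · exact hq2mem
          · exact hc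
        | zero => rw [zero_mul]; exact Submodule.zero_mem _
        | add y z _ _ hy hz => rw [add_mul]; exact Submodule.add_mem _ hy hz
        | smul c y _ hy => rw [smul_mul_assoc]; exact Submodule.smul_mem _ _ hy
      have hmulK : ∀ a ∈ K, ∀ b ∈ K, a * b ∈ K := by
        apply span_mul_closed
        intro x hx y hy
        simp only [Set.mem_insert_iff, Set.mem_singleton_iff] at hx hy
        rcases hx with rfl | rfl | rfl <;> rcases hy with rfl | rfl | rfl
        · rw [one_mul]; exact h1mem
        · rw [one_mul]; exact hqmem
        · rw [one_mul]; exact hq2mem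
        · rw [mul_one]; exact hqmem
        · exact hq2mem
        · rw [← mul_assoc]; exact hc
        · rw [mul_one]; exact hq2mem
        · exact hc
        · rw [← mul_assoc]; exact hstepq _ hc
      have hinvK := inv_mem hdim h1mem hmulK (le_of_eq hfr)
      have hx : ∃ x : H, x ∉ K := by
        by_contra hcon
        push_neg at hcon
        have : K = ⊤ := Submodule.eq_top_iff'.mpr hcon
        rw [this, finrank_top, hdim] at hfr
        omega
      obtain ⟨x, hx⟩ := hx
      have hx0 : x ≠ 0 := fun h => hx (h ▸ K.zero_mem)
      set f := LinearMap.mulRight F x with hf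
      have hfinj : Function.Injective f := fun a b hab => mul_right_cancel₀ hx0 hab
      set Kx := Submodule.map f K with hKx
      have hfrx : Module.finrank F Kx = 3 := by
        rw [← hfr]
        exact (LinearEquiv.finrank_eq (Submodule.equivMapOfInjective f hfinj K)).symm
      have hinf : K ⊓ Kx = ⊥ := by
        rw [eq_bot_iff]
        rintro z ⟨hzK, hzKx⟩
        obtain ⟨k, hkK, rfl⟩ := Submodule.mem_map.mp hzKx
        by_cases hk0 : k = 0
        · simp [hf, hk0]
        · exfalso
          apply hx
          have : x = k⁻¹ * (k * x) := by rw [inv_mul_cancel_left₀ hk0]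
          rw [this]
          exact hmulK _ (hinvK k hkK hk0) _ hzK
      have hsum := Submodule.finrank_sup_add_finrank_inf_eq K Kx
      rw [hinf, hfr, hfrx] at hsum
      have hle := Submodule.finrank_le (K ⊔ Kx)
      rw [hdim] at hle
      rw [finrank_bot] at hsum
      omega
    · -- 1,q,q²,q³ linearly independent : H = F[q] is commutative, contradiction
      have hsnoc4 : ![(1:H), q, q*q, (q*q)*q] = Fin.snoc ![(1:H), q, q*q] ((q*q)*q) := by
        funext i; fin_cases i <;> rfl
      have hind4 : LinearIndependent F ![(1:H), q, q*q, (q*q)*q] := by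
        rw [hsnoc4, linearIndependent_fin_snoc]
        exact ⟨hind3, by rw [hrange3]; exact hc⟩
      have hspan : Submodule.span F (Set.range ![(1:H), q, q*q, (q*q)*q]) = ⊤ := by
        apply hind4.span_eq_top_of_card_eq_finrank
        simp [hdim]
      apply hq1
      apply central_mem hcenter
      intro x
      have hx : x ∈ Submodule.span F (Set.range ![(1:H), q, q*q, (q*q)*q]) := by
        rw [hspan]; exact Submodule.mem_top
      induction hx using Submodule.span_induction with
      | mem y hy =>
        obtain ⟨i, rfl⟩ := hy
        fin_cases i <;> simp [mul_assoc]
      | zero => simp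
      | add y z _ _ hy hz => rw [mul_add, add_mul, hy, hz]
      | smul c y _ hy => rw [mul_smul_comm, smul_mul_assoc, hy]

/-- No 2-dimensional subspace `F + Fq` is normalized by every element of `H`. -/
lemma not_normal (hcenter : CenterEqF F H) (hdim : Module.finrank F H = 4)
    {K : Submodule F H} {q : H} (hq : q ∉ Submodule.span F {(1:H)})
    (hKs : K = Submodule.span F {(1:H), q}) :
    ∃ y : H, y ≠ 0 ∧ ∃ k ∈ K, y * k * y⁻¹ ∉ K := by
  by_contra hcon
  push_neg at hcon
  obtain ⟨t, n, hqq⟩ := quad hcenter hdim q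
  set C : Submodule F H := LinearMap.ker (LinearMap.mulRight F q - LinearMap.mulLeft F q) with hC
  set C' : Submodule F H :=
    LinearMap.ker (LinearMap.mulRight F q + LinearMap.mulLeft F q - t • LinearMap.id) with hC'
  have hmemC : ∀ y : H, y * q = q * y → y ∈ C := by
    intro y hy
    rw [hC]
    simp only [LinearMap.mem_ker, LinearMap.sub_apply, LinearMap.mulRight_apply,
      LinearMap.mulLeft_apply]
    rw [hy, sub_self]
  have hmemC' : ∀ y : H, y * q + q * y = t • y → y ∈ C' := by
    intro y hy
    rw [hC']
    simp only [LinearMap.mem_ker, LinearMap.sub_apply, LinearMap.add_apply,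
      LinearMap.mulRight_apply, LinearMap.mulLeft_apply, LinearMap.smul_apply, LinearMap.id_coe,
      id_eq]
    rw [hy, sub_self]
  have hcover : ∀ y : H, y ∈ C ∨ y ∈ C' := by
    intro y
    by_cases hy : y = 0
    · left; rw [hy]; exact Submodule.zero_mem _
    · have hr : y * q * y⁻¹ ∈ K := hcon y hy q (by rw [hKs]; exact Submodule.subset_span (by simp))
      set r := y * q * y⁻¹ with hrdef
      have hr2 : r * r = y * (q*q) * y⁻¹ := by
        rw [hrdef]
        simp only [mul_assoc]
        rw [inv_mul_cancel_left₀ hy]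
      have hrr : r * r = t • r + n • (1:H) := by
        rw [hr2, hqq, mul_add, mul_smul_comm, mul_smul_comm, add_mul, smul_mul_assoc,
          smul_mul_assoc, mul_one, mul_inv_cancel₀ hy, ← hrdef]
      rw [hKs] at hr
      obtain ⟨a, b, hab⟩ := Submodule.mem_span_pair.mp hr
      have hrq : r * q = q * r := by
        rw [← hab, add_mul, mul_add, smul_mul_assoc, smul_mul_assoc, mul_smul_comm,
          mul_smul_comm, one_mul, mul_one]
      set s := t • (1:H) with hs
      have hfact : (r - q) * (r - (s - q)) = 0 := by
        have expand : (r - q) * (r - (s - q)) =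
            r*r - r*s + r*q - q*r + q*s - q*q := by noncomm_ring
        rw [expand, hrq, hrr, hqq, hs, mul_smul_comm, mul_one, mul_smul_comm, mul_one]
        abel
      rcases mul_eq_zero.mp hfact with h0 | h0
      · left
        have hrq' : r = q := sub_eq_zero.mp h0
        apply hmemC
        calc y * q = (y * q * y⁻¹) * y := by rw [inv_mul_cancel_right₀ hy]
          _ = q * y := by rw [← hrdef, hrq']
      · right
        have hrq' : r = s - q := sub_eq_zero.mp h0
        apply hmemC'
        have hyq : y * q = (s - q) * y := by
          calc y * q = (y * q * y⁻¹) * y := by rw [inv_mul_cancel_right₀ hy]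
            _ = (s - q) * y := by rw [← hrdef, hrq']
        rw [hyq, hs, sub_mul, smul_mul_assoc, one_mul]
        abel
  rcases two_cover C C' hcover with hall | hall
  · apply hq
    apply central_mem hcenter
    intro x
    have hx := hall x
    rw [hC] at hx
    simp only [LinearMap.mem_ker, LinearMap.sub_apply, LinearMap.mulRight_apply,
      LinearMap.mulLeft_apply] at hx
    exact (sub_eq_zero.mp hx).symm
  · have hid : ∀ y : H, y * q + q * y = t • y := by
      intro y
      have hy := hall y
      rw [hC'] at hy
      simp only [LinearMap.mem_ker, LinearMap.sub_apply, LinearMap.add_apply,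
        LinearMap.mulRight_apply, LinearMap.mulLeft_apply, LinearMap.smul_apply,
        LinearMap.id_coe, id_eq] at hy
      exact sub_eq_zero.mp hy
    have h1q : q + q = t • (1:H) := by simpa using hid 1
    apply hq
    apply central_mem hcenter
    intro x
    have hx := hid x
    have e1 : t • x = q * x + q * x := by
      calc t • x = (t • (1:H)) * x := by rw [smul_mul_assoc, one_mul]
        _ = (q + q) * x := by rw [h1q]
        _ = q * x + q * x := add_mul _ _ _
    rw [e1] at hx
    exact (add_right_cancel hx).symm

/-! ### Lines -/

lemma line_basis (hdim : Module.finrank F H = 4) (M : Line F H) :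
    ∃ u v : H, u ≠ 0 ∧ v ∉ Submodule.span F {u} ∧ M.1 = Submodule.span F {u, v} := by
  haveI := fd hdim
  have hne : M.1 ≠ ⊥ := by
    intro h
    have := M.2
    rw [h] at this
    rw [finrank_bot] at this
    omega
  obtain ⟨u, huM, hu0⟩ := Submodule.ne_bot_iff _ |>.mp hne
  have hnle : ¬ M.1 ≤ Submodule.span F {u} := by
    intro hle
    have h1 := Submodule.finrank_mono hle
    rw [M.2, finrank_span_singleton hu0] at h1
    omega
  obtain ⟨v, hvM, hv⟩ := SetLike.not_le_iff_exists.mp hnle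
  refine ⟨u, v, hu0, hv, ?_⟩
  have hle : Submodule.span F {u, v} ≤ M.1 := by
    rw [Submodule.span_le]
    rintro z (rfl | rfl)
    · exact huM
    · exact hvM
  have := Submodule.eq_of_le_of_finrank_le hle (by rw [M.2, finrank_span_pair hu0 hv])
  exact this.symm

lemma line_span_one (hdim : Module.finrank F H = 4) (L : Line F H) (hL : (1:H) ∈ L.1) :
    ∃ q : H, q ∉ Submodule.span F {(1:H)} ∧ L.1 = Submodule.span F {(1:H), q} := by
  haveI := fd hdim
  have hnle : ¬ L.1 ≤ Submodule.span F {(1:H)} := by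
    intro hle
    have h1 := Submodule.finrank_mono hle
    rw [L.2, finrank_span_singleton (one_ne_zero : (1:H) ≠ 0)] at h1
    omega
  obtain ⟨q, hqL, hq⟩ := SetLike.not_le_iff_exists.mp hnle
  refine ⟨q, hq, ?_⟩
  have hle : Submodule.span F {(1:H), q} ≤ L.1 := by
    rw [Submodule.span_le]
    rintro z (rfl | rfl)
    · exact hL
    · exact hqL
  exact (Submodule.eq_of_le_of_finrank_le hle
    (by rw [L.2, finrank_span_pair (one_ne_zero : (1:H) ≠ 0) hq])).symm

lemma line_mul_closed (hcenter : CenterEqF F H) (hdim : Module.finrank F H = 4)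
    (L : Line F H) (hL : (1:H) ∈ L.1) :
    ∀ a ∈ L.1, ∀ b ∈ L.1, a * b ∈ L.1 := by
  obtain ⟨q, hq, hLs⟩ := line_span_one hdim L hL
  obtain ⟨t, n, hqq⟩ := quad hcenter hdim q
  rw [hLs]
  apply span_mul_closed
  intro x hx y hy
  simp only [Set.mem_insert_iff, Set.mem_singleton_iff] at hx hy
  have hqqmem : q * q ∈ Submodule.span F {(1:H), q} := by
    rw [hqq]
    exact Submodule.add_mem _
      (Submodule.smul_mem _ _ (Submodule.subset_span (by simp)))
      (Submodule.smul_mem _ _ (Submodule.subset_span (by simp)))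
  rcases hx with rfl | rfl <;> rcases hy with rfl | rfl
  · rw [one_mul]; exact Submodule.subset_span (by simp)
  · rw [one_mul]; exact Submodule.subset_span (by simp)
  · rw [mul_one]; exact Submodule.subset_span (by simp)
  · exact hqqmem

lemma line_inv_closed (hcenter : CenterEqF F H) (hdim : Module.finrank F H = 4)
    (L : Line F H) (hL : (1:H) ∈ L.1) :
    ∀ k ∈ L.1, k ≠ 0 → k⁻¹ ∈ L.1 :=
  inv_mem hdim hL (line_mul_closed hcenter hdim L hL) (by rw [L.2]; omega)

/-- Left translate of a line is a line. -/
lemma exists_left_line (hdim : Module.finrank F H = 4) (g : H) (hg : g ≠ 0) (M : Line F H) :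
    ∃ N : Line F H, (N.1 : Set H) = (fun m => g * m) '' (M.1 : Set H) := by
  haveI := fd hdim
  have hinj : Function.Injective (LinearMap.mulLeft F g) := fun a b hab =>
    mul_left_cancel₀ hg hab
  refine ⟨⟨Submodule.map (LinearMap.mulLeft F g) M.1, ?_⟩, ?_⟩
  · rw [← (LinearEquiv.finrank_eq (Submodule.equivMapOfInjective _ hinj M.1))]
    exact M.2
  · rfl

/-- Right translate of a line is a line. -/
lemma exists_right_line (hdim : Module.finrank F H = 4) (g : H) (hg : g ≠ 0) (M : Line F H) :
    ∃ N : Line F H, (N.1 : Set H) = (fun m => m * g) '' (M.1 : Set H) := by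
  haveI := fd hdim
  have hinj : Function.Injective (LinearMap.mulRight F g) := fun a b hab =>
    mul_right_cancel₀ hg hab
  refine ⟨⟨Submodule.map (LinearMap.mulRight F g) M.1, ?_⟩, ?_⟩
  · rw [← (LinearEquiv.finrank_eq (Submodule.equivMapOfInjective _ hinj M.1))]
    exact M.2
  · rfl

lemma img_left_cancel {g : H} (hg : g ≠ 0) (S : Set H) :
    (fun m => g⁻¹ * m) '' ((fun m => g * m) '' S) = S := by
  rw [Set.image_image]
  have he : ∀ m : H, g⁻¹ * (g * m) = m := fun m => inv_mul_cancel_left₀ hg m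
  calc (fun m => g⁻¹ * (g * m)) '' S = (fun m => m) '' S := by
        apply Set.image_congr'
        exact he
    _ = S := Set.image_id S

lemma img_right_cancel {g : H} (hg : g ≠ 0) (S : Set H) :
    (fun m => m * g⁻¹) '' ((fun m => m * g) '' S) = S := by
  rw [Set.image_image]
  have he : ∀ m : H, m * g * g⁻¹ = m := fun m => mul_inv_cancel_right₀ hg m
  calc (fun m => m * g * g⁻¹) '' S = (fun m => m) '' S := by
        apply Set.image_congr'
        exact he
    _ = S := Set.image_id S

lemma img_right_cancel' {g : H} (hg : g ≠ 0) (S : Set H) :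
    (fun m => m * g) '' ((fun m => m * g⁻¹) '' S) = S := by
  have := img_right_cancel (inv_ne_zero hg) S
  rwa [inv_inv] at this

/-- The image of a line under an additive bijection compatible with a surjective
map of scalars is a line. -/
lemma exists_lineImage (hdim : Module.finrank F H = 4) (β : H → H)
    (hbij : Function.Bijective β) (hadd : ∀ x y, β (x+y) = β x + β y)
    (σ : F → F) (hσ : Function.Surjective σ)
    (hsmul : ∀ (a : F) (x : H), β (a • x) = σ a • β x) (M : Line F H) :
    ∃ N : Line F H, (N.1 : Set H) = β '' (M.1 : Set H) := by
  haveI := fd hdim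
  have hβ0 : β 0 = 0 := by
    have h00 := hadd 0 0
    rw [add_zero] at h00
    exact (left_eq_add.mp h00)
  obtain ⟨u, v, hu0, hv, hMs⟩ := line_basis hdim M
  have hβu0 : β u ≠ 0 := fun h => hu0 (hbij.1 (by rw [h, hβ0]))
  have hβv : β v ∉ Submodule.span F {β u} := by
    intro hmem
    obtain ⟨a, ha⟩ := Submodule.mem_span_singleton.mp hmem
    obtain ⟨a', rfl⟩ := hσ a
    have hvv : β (a' • u) = β v := by rw [hsmul]; exact ha
    exact hv (Submodule.mem_span_singleton.mpr ⟨a', hbij.1 hvv⟩)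
  refine ⟨⟨Submodule.span F {β u, β v}, finrank_span_pair hβu0 hβv⟩, ?_⟩
  ext z
  simp only [SetLike.mem_coe]
  constructor
  · intro hz
    obtain ⟨a, b, hab⟩ := Submodule.mem_span_pair.mp hz
    obtain ⟨a', rfl⟩ := hσ a
    obtain ⟨b', rfl⟩ := hσ b
    refine ⟨a' • u + b' • v, ?_, ?_⟩
    · rw [hMs]
      exact Submodule.add_mem _
        (Submodule.smul_mem _ _ (Submodule.subset_span (by simp)))
        (Submodule.smul_mem _ _ (Submodule.subset_span (by simp)))
    · rw [hadd, hsmul, hsmul, hab]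
  · rintro ⟨m, hm, rfl⟩
    rw [hMs] at hm
    obtain ⟨a, b, hab⟩ := Submodule.mem_span_pair.mp hm
    rw [← hab, hadd, hsmul, hsmul]
    exact Submodule.add_mem _
      (Submodule.smul_mem _ _ (Submodule.subset_span (by simp)))
      (Submodule.smul_mem _ _ (Submodule.subset_span (by simp)))

/-- A ring automorphism or antiautomorphism of `H` induces a surjective map of the
centre `F`, compatible with scalars. -/
lemma exists_sigma (hcenter : CenterEqF F H) (β : H → H) (hbij : Function.Bijective β)
    (hmul : (∀ x y, β (x*y) = β x * β y) ∨ (∀ x y, β (x*y) = β y * β x)) :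
    ∃ σ : F → F, Function.Surjective σ ∧
      (∀ a : F, β (algebraMap F H a) = algebraMap F H (σ a)) ∧
      (∀ (a : F) (x : H), β (a • x) = σ a • β x) := by
  have halg : Function.Injective (algebraMap F H) := (algebraMap F H).injective
  have hcent : ∀ a : F, ∃ b : F, β (algebraMap F H a) = algebraMap F H b := by
    intro a
    apply (hcenter _).mp
    intro x
    obtain ⟨y, rfl⟩ := hbij.2 x
    rcases hmul with hm | hm
    · rw [← hm, ← hm, Algebra.commutes]
    · rw [← hm, ← hm, Algebra.commutes]
  choose σ hσ using hcent
  refine ⟨σ, ?_, hσ, ?_⟩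
  · intro b
    obtain ⟨z, hz⟩ := hbij.2 (algebraMap F H b)
    have hzc : ∀ x : H, z * x = x * z := by
      intro x
      apply hbij.1
      rcases hmul with hm | hm
      · rw [hm, hm, hz]
        exact Algebra.commutes b (β x)
      · rw [hm, hm, hz]
        exact (Algebra.commutes b (β x)).symm
    obtain ⟨a, ha⟩ := (hcenter z).mp hzc
    refine ⟨a, halg ?_⟩
    rw [← hσ a, ← ha, hz]
  · intro a x
    rcases hmul with hm | hm
    · rw [Algebra.smul_def, hm, hσ, ← Algebra.smul_def]
    · rw [Algebra.smul_def, hm, hσ, ← Algebra.commutes, ← Algebra.smul_def]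

/-- Conjugation preserves the property that the `∥`-class is the left class. -/
lemma conj_type_left (hdim : Module.finrank F H = 4) (par : Line F H → Line F H → Prop)
    (hpar : IsCliffordLike F H par) {L L' : Line F H}
    (hL : (1:H) ∈ L.1) (hL' : (1:H) ∈ L'.1) {g : H} (hg : g ≠ 0)
    (himg : (L'.1 : Set H) = (fun m => g * m * g⁻¹) '' (L.1 : Set H))
    (hT : parClass F H par L = leftClass F H L) :
    parClass F H par L' = leftClass F H L' := by
  rcases hpar.2 L' with hT' | hQ'
  · exact hT'
  · obtain ⟨gL, hgL⟩ := exists_left_line hdim g hg L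
    have h1 : par gL L := by
      have hmem : gL ∈ leftClass F H L :=
        ⟨g⁻¹, inv_ne_zero hg, by rw [hgL, img_left_cancel hg]⟩
      rw [← hT] at hmem
      exact hmem
    have h2 : par gL L' := by
      have hmem : gL ∈ rightClass F H L' := by
        refine ⟨g⁻¹, inv_ne_zero hg, ?_⟩
        rw [himg, hgL, Set.image_image]
      rw [← hQ'] at hmem
      exact hmem
    have h3 : par L L' := hpar.1.1.trans (hpar.1.1.symm h1) h2
    obtain ⟨U, _, hUuniq⟩ := hpar.1.2 1 one_ne_zero L'
    have e1 : L = U := hUuniq L ⟨hL, h3⟩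
    have e2 : L' = U := hUuniq L' ⟨hL', hpar.1.1.refl L'⟩
    rw [e2, ← e1]
    exact hT

/-- Conjugation preserves the property that the `∥`-class is the right class. -/
lemma conj_type_right (hdim : Module.finrank F H = 4) (par : Line F H → Line F H → Prop)
    (hpar : IsCliffordLike F H par) {L L' : Line F H}
    (hL : (1:H) ∈ L.1) (hL' : (1:H) ∈ L'.1) {g : H} (hg : g ≠ 0)
    (himg : (L'.1 : Set H) = (fun m => g * m * g⁻¹) '' (L.1 : Set H))
    (hT : parClass F H par L = rightClass F H L) :
    parClass F H par L' = rightClass F H L' := by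
  rcases hpar.2 L' with hP' | hT'
  · obtain ⟨N, hN⟩ := exists_right_line hdim g⁻¹ (inv_ne_zero hg) L
    have h1 : par N L := by
      have hmem : N ∈ rightClass F H L :=
        ⟨g, hg, by rw [hN, img_right_cancel' hg]⟩
      rw [← hT] at hmem
      exact hmem
    have h2 : par N L' := by
      have hmem : N ∈ leftClass F H L' := by
        refine ⟨g, hg, ?_⟩
        rw [himg, hN, Set.image_image]
        apply Set.image_congr'
        intro m
        rw [mul_assoc]
      rw [← hP'] at hmem
      exact hmem
    have h3 : par L L' := hpar.1.1.trans (hpar.1.1.symm h1) h2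
    obtain ⟨U, _, hUuniq⟩ := hpar.1.2 1 one_ne_zero L'
    have e1 : L = U := hUuniq L ⟨hL, h3⟩
    have e2 : L' = U := hUuniq L' ⟨hL', hpar.1.1.refl L'⟩
    rw [e2, ← e1]
    exact hT
  · exact hT'

/-- The image of a line through 1 under an `F`-linear (anti)multiplicative injection
is conjugate to it. -/
lemma image_conj (hcenter : CenterEqF F H) (hdim : Module.finrank F H = 4)
    (δ : H → H) (hinj : Function.Injective δ) (hδ1 : δ 1 = 1)
    (hsq : ∀ x, δ (x*x) = δ x * δ x) (hadd : ∀ x y, δ (x+y) = δ x + δ y)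
    (hsmul : ∀ (a:F) (x : H), δ (a•x) = a • δ x)
    {L L' : Line F H} (hL : (1:H) ∈ L.1) (himg : (L'.1 : Set H) = δ '' (L.1 : Set H)) :
    (1:H) ∈ L'.1 ∧ ∃ g : H, g ≠ 0 ∧
      (L'.1 : Set H) = (fun m => g * m * g⁻¹) '' (L.1 : Set H) := by
  obtain ⟨q, hq, hLs⟩ := line_span_one hdim L hL
  have h1' : (1:H) ∈ L'.1 := by
    have hm : (1:H) ∈ (L'.1 : Set H) := by rw [himg]; exact ⟨1, hL, hδ1⟩
    exact hm
  obtain ⟨t, n, hqq⟩ := quad hcenter hdim q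
  have hq' : δ q ∉ Submodule.span F {(1:H)} := by
    intro hmem
    obtain ⟨a, ha⟩ := Submodule.mem_span_singleton.mp hmem
    apply hq
    have hdq : δ (a • (1:H)) = δ q := by rw [hsmul, hδ1, ha]
    exact Submodule.mem_span_singleton.mpr ⟨a, hinj hdq⟩
  have hqq' : δ q * δ q = t • δ q + n • (1:H) := by
    rw [← hsq, hqq, hadd, hsmul, hsmul, hδ1]
  obtain ⟨g, hg, hgq⟩ := root_conj hcenter hdim hq hqq hqq'
  have hconj : δ q = g * q * g⁻¹ := by
    calc δ q = δ q * g * g⁻¹ := by rw [mul_inv_cancel_right₀ hg]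
      _ = g * q * g⁻¹ := by rw [hgq]
  refine ⟨h1', g, hg, ?_⟩
  rw [himg, hLs]
  apply Set.image_congr
  intro m hm
  obtain ⟨a, b, hab⟩ := Submodule.mem_span_pair.mp hm
  rw [← hab, hadd, hsmul, hsmul, hδ1, hconj]
  simp only [mul_add, add_mul, mul_smul_comm, smul_mul_assoc, mul_one, mul_inv_cancel₀ hg]

lemma image_type_left (hcenter : CenterEqF F H) (hdim : Module.finrank F H = 4)
    (par : Line F H → Line F H → Prop) (hpar : IsCliffordLike F H par)
    (δ : H → H) (hinj : Function.Injective δ) (hδ1 : δ 1 = 1)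
    (hsq : ∀ x, δ (x*x) = δ x * δ x) (hadd : ∀ x y, δ (x+y) = δ x + δ y)
    (hsmul : ∀ (a:F) (x : H), δ (a•x) = a • δ x)
    {L L' : Line F H} (hL : (1:H) ∈ L.1) (himg : (L'.1 : Set H) = δ '' (L.1 : Set H))
    (hT : parClass F H par L = leftClass F H L) :
    parClass F H par L' = leftClass F H L' := by
  obtain ⟨h1', g, hg, himg2⟩ := image_conj hcenter hdim δ hinj hδ1 hsq hadd hsmul hL himg
  exact conj_type_left hdim par hpar hL h1' hg himg2 hT

lemma image_type_right (hcenter : CenterEqF F H) (hdim : Module.finrank F H = 4)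
    (par : Line F H → Line F H → Prop) (hpar : IsCliffordLike F H par)
    (δ : H → H) (hinj : Function.Injective δ) (hδ1 : δ 1 = 1)
    (hsq : ∀ x, δ (x*x) = δ x * δ x) (hadd : ∀ x y, δ (x+y) = δ x + δ y)
    (hsmul : ∀ (a:F) (x : H), δ (a•x) = a • δ x)
    {L L' : Line F H} (hL : (1:H) ∈ L.1) (himg : (L'.1 : Set H) = δ '' (L.1 : Set H))
    (hT : parClass F H par L = rightClass F H L) :
    parClass F H par L' = rightClass F H L' := by
  obtain ⟨h1', g, hg, himg2⟩ := image_conj hcenter hdim δ hinj hδ1 hsq hadd hsmul hL himg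
  exact conj_type_right hdim par hpar hL h1' hg himg2 hT

/-- One direction of preservation, for an `F`-linear ring automorphism. -/
lemma pres_dir (hcenter : CenterEqF F H) (hdim : Module.finrank F H = 4)
    (par : Line F H → Line F H → Prop) (hpar : IsCliffordLike F H par)
    (β : H → H) (hbij : Function.Bijective β) (hadd : ∀ x y, β (x+y) = β x + β y)
    (hmul : ∀ x y, β (x*y) = β x * β y) (hβ1 : β 1 = 1)
    (hsmul : ∀ (a:F) (x : H), β (a•x) = a • β x) :
    ∀ M N M' N' : Line F H, (M'.1:Set H) = β '' (M.1 : Set H) →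
      (N'.1:Set H) = β '' (N.1 : Set H) → par M N → par M' N' := by
  intro M N M' N' hM' hN' hMN
  have hβ0 : β 0 = 0 := by
    have h00 := hadd 0 0
    rw [add_zero] at h00
    exact (left_eq_add.mp h00)
  obtain ⟨L, ⟨hL1, hLM⟩, _⟩ := hpar.1.2 1 one_ne_zero M
  have hLN : par L N := hpar.1.1.trans hLM hMN
  obtain ⟨LL, hLL⟩ := exists_lineImage hdim β hbij hadd id Function.surjective_id hsmul L
  have hLL1 : (1:H) ∈ LL.1 := by
    have hm : (1:H) ∈ (LL.1 : Set H) := by rw [hLL]; exact ⟨1, hL1, hβ1⟩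
    exact hm
  have hsq : ∀ x, β (x*x) = β x * β x := fun x => hmul x x
  rcases hpar.2 L with hT | hT
  · have hTL := image_type_left hcenter hdim par hpar β hbij.1 hβ1 hsq hadd hsmul hL1 hLL hT
    have hMmem : M ∈ leftClass F H L := by rw [← hT]; exact hpar.1.1.symm hLM
    have hNmem : N ∈ leftClass F H L := by rw [← hT]; exact hpar.1.1.symm hLN
    obtain ⟨h, hh0, hhs⟩ := hMmem
    obtain ⟨k, hk0, hks⟩ := hNmem
    have hβh0 : β h ≠ 0 := fun h0 => hh0 (hbij.1 (by rw [h0, hβ0]))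
    have hβk0 : β k ≠ 0 := fun h0 => hk0 (hbij.1 (by rw [h0, hβ0]))
    have hM'mem : M' ∈ leftClass F H LL := by
      refine ⟨β h, hβh0, ?_⟩
      rw [hLL, hM', hhs, Set.image_image, Set.image_image]
      exact Set.image_congr' (fun m => hmul h m)
    have hN'mem : N' ∈ leftClass F H LL := by
      refine ⟨β k, hβk0, ?_⟩
      rw [hLL, hN', hks, Set.image_image, Set.image_image]
      exact Set.image_congr' (fun m => hmul k m)
    rw [← hTL] at hM'mem hN'mem
    exact hpar.1.1.trans hM'mem (hpar.1.1.symm hN'mem)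
  · have hTL := image_type_right hcenter hdim par hpar β hbij.1 hβ1 hsq hadd hsmul hL1 hLL hT
    have hMmem : M ∈ rightClass F H L := by rw [← hT]; exact hpar.1.1.symm hLM
    have hNmem : N ∈ rightClass F H L := by rw [← hT]; exact hpar.1.1.symm hLN
    obtain ⟨h, hh0, hhs⟩ := hMmem
    obtain ⟨k, hk0, hks⟩ := hNmem
    have hβh0 : β h ≠ 0 := fun h0 => hh0 (hbij.1 (by rw [h0, hβ0]))
    have hβk0 : β k ≠ 0 := fun h0 => hk0 (hbij.1 (by rw [h0, hβ0]))
    have hM'mem : M' ∈ rightClass F H LL := by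
      refine ⟨β h, hβh0, ?_⟩
      rw [hLL, hM', hhs, Set.image_image, Set.image_image]
      exact Set.image_congr' (fun m => hmul m h)
    have hN'mem : N' ∈ rightClass F H LL := by
      refine ⟨β k, hβk0, ?_⟩
      rw [hLL, hN', hks, Set.image_image, Set.image_image]
      exact Set.image_congr' (fun m => hmul m k)
    rw [← hTL] at hM'mem hN'mem
    exact hpar.1.1.trans hM'mem (hpar.1.1.symm hN'mem)

/-- An `F`-linear ring automorphism preserves any Clifford-like parallelism. -/
lemma pres_full (hcenter : CenterEqF F H) (hdim : Module.finrank F H = 4)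
    (par : Line F H → Line F H → Prop) (hpar : IsCliffordLike F H par)
    (β : H → H) (hbij : Function.Bijective β) (hadd : ∀ x y, β (x+y) = β x + β y)
    (hmul : ∀ x y, β (x*y) = β x * β y) (hβ1 : β 1 = 1)
    (hsmul : ∀ (a:F) (x : H), β (a•x) = a • β x) :
    Preserves F H β par := by
  set e : H ≃ H := Equiv.ofBijective β hbij with he
  have happ : ∀ x, β (e.symm x) = x := by
    intro x; rw [he]; exact Equiv.ofBijective_apply_symm_apply β hbij x
  have hsymm : ∀ x, e.symm (β x) = x := by
    intro x; rw [he]; exact Equiv.ofBijective_symm_apply_apply β hbij x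
  have hi_bij : Function.Bijective (⇑e.symm) := e.symm.bijective
  have hsymm_add : ∀ x y, e.symm (x+y) = e.symm x + e.symm y := by
    intro x y; apply hbij.1; rw [hadd, happ, happ, happ]
  have hsymm_mul : ∀ x y, e.symm (x*y) = e.symm x * e.symm y := by
    intro x y; apply hbij.1; rw [hmul, happ, happ, happ]
  have hsymm_one : e.symm 1 = 1 := by apply hbij.1; rw [happ, hβ1]
  have hsymm_smul : ∀ (a:F) (x : H), e.symm (a • x) = a • e.symm x := by
    intro a x; apply hbij.1; rw [hsmul, happ, happ]
  intro M N M' N' hM' hN'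
  constructor
  · exact pres_dir hcenter hdim par hpar β hbij hadd hmul hβ1 hsmul M N M' N' hM' hN'
  · intro hp
    have key : ∀ (S : Set H), (⇑e.symm) '' (β '' S) = S := by
      intro S
      rw [Set.image_image]
      calc (fun m => e.symm (β m)) '' S = (fun m => m) '' S := Set.image_congr' hsymm
        _ = S := Set.image_id _
    refine pres_dir hcenter hdim par hpar (⇑e.symm) hi_bij hsymm_add hsymm_mul hsymm_one
      hsymm_smul M' N' M N ?_ ?_ hp
    · rw [hM', key]
    · rw [hN', key]

lemma exists_line_one (hdim : Module.finrank F H = 4) :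
    ∃ L : Line F H, (1:H) ∈ L.1 := by
  haveI := fd hdim
  have hex : ∃ q : H, q ∉ Submodule.span F {(1:H)} := by
    by_contra hcon
    push_neg at hcon
    have hle : (⊤ : Submodule F H) ≤ Submodule.span F {(1:H)} := fun x _ => hcon x
    have h1 := Submodule.finrank_mono hle
    rw [finrank_top, hdim, finrank_span_singleton (one_ne_zero : (1:H) ≠ 0)] at h1
    omega
  obtain ⟨q, hq⟩ := hex
  exact ⟨⟨Submodule.span F {(1:H), q}, finrank_span_pair one_ne_zero hq⟩,
    Submodule.subset_span (by simp)⟩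

/-- The core contradiction: no `F`-linear antiautomorphism preserves a
Clifford-like parallelism. -/
lemma anti_core (hcenter : CenterEqF F H) (hdim : Module.finrank F H = 4)
    (par : Line F H → Line F H → Prop) (hpar : IsCliffordLike F H par)
    (δ : H → H) (hbij : Function.Bijective δ) (hadd : ∀ x y, δ (x+y) = δ x + δ y)
    (hδ1 : δ 1 = 1) (hanti : ∀ x y, δ (x*y) = δ y * δ x)
    (hsmul : ∀ (a:F) (x : H), δ (a•x) = a • δ x)
    (hδpres : Preserves F H δ par) : False := by
  haveI := fd hdim
  obtain ⟨L, hL1⟩ := exists_line_one hdim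
  obtain ⟨K, hK⟩ := exists_lineImage hdim δ hbij hadd id Function.surjective_id hsmul L
  have hK1 : (1:H) ∈ K.1 := by
    have hm : (1:H) ∈ (K.1 : Set H) := by rw [hK]; exact ⟨1, hL1, hδ1⟩
    exact hm
  have hsq : ∀ x, δ (x*x) = δ x * δ x := fun x => hanti x x
  have hδ0 : δ 0 = 0 := by
    have h00 := hadd 0 0
    rw [add_zero] at h00
    exact (left_eq_add.mp h00)
  obtain ⟨qK, hqK, hKspan⟩ := line_span_one hdim K hK1
  obtain ⟨y, hy0, kb, hkbK, hkbad⟩ := not_normal hcenter hdim hqK hKspan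
  have hKmul := line_mul_closed hcenter hdim K hK1
  have hKinv := line_inv_closed hcenter hdim K hK1
  set e : H ≃ H := Equiv.ofBijective δ hbij with he
  have happ : ∀ x, δ (e.symm x) = x := by
    intro x; rw [he]; exact Equiv.ofBijective_apply_symm_apply δ hbij x
  rcases hpar.2 L with hT | hT
  · -- left type
    have hTK : parClass F H par K = leftClass F H K :=
      image_type_left hcenter hdim par hpar δ hbij.1 hδ1 hsq hadd hsmul hL1 hK hT
    have hδx : δ (e.symm y) = y := happ y
    have hx0 : e.symm y ≠ 0 := by
      intro h0; apply hy0; rw [← hδx, h0, hδ0]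
    obtain ⟨M, hM⟩ := exists_left_line hdim _ hx0 L
    obtain ⟨M', hM'⟩ := exists_right_line hdim y hy0 K
    have hMδ : (M'.1 : Set H) = δ '' (M.1 : Set H) := by
      rw [hM', hM, hK, Set.image_image, Set.image_image]
      apply Set.image_congr'
      intro m
      rw [hanti, hδx]
    have hparML : par M L := by
      have hmem : M ∈ leftClass F H L :=
        ⟨(e.symm y)⁻¹, inv_ne_zero hx0, by rw [hM, img_left_cancel hx0]⟩
      rw [← hT] at hmem
      exact hmem
    have hparM'K : par M' K := (hδpres M L M' K hMδ hK).mp hparML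
    have hM'mem : M' ∈ leftClass F H K := by rw [← hTK]; exact hparM'K
    obtain ⟨h, hh0, hhs⟩ := hM'mem
    have hhs2 : (K.1 : Set H) = (fun m => h * (m * y)) '' (K.1 : Set H) := by
      conv_lhs => rw [hhs, hM']
      rw [Set.image_image]
    obtain ⟨k0, hk0K, hk0e⟩ : ∃ k0 ∈ (K.1 : Set H), h * (k0 * y) = 1 := by
      have hm : (1:H) ∈ (fun m => h * (m * y)) '' (K.1 : Set H) := by
        rw [← hhs2]; exact hK1
      obtain ⟨k0, h1, h2⟩ := hm
      exact ⟨k0, h1, h2⟩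
    have hk00 : k0 ≠ 0 := by
      rintro rfl; rw [zero_mul, mul_zero] at hk0e; exact one_ne_zero hk0e.symm
    have hh : h = y⁻¹ * k0⁻¹ := by
      rw [eq_inv_of_mul_eq_one_left hk0e, mul_inv_rev]
    have hconjall : ∀ k ∈ K.1, y * k * y⁻¹ ∈ K.1 := by
      intro k hkK
      obtain ⟨k2, hk2K, hk2⟩ : ∃ k2 ∈ (K.1 : Set H), h * (k2 * y) = k := by
        have hm : k ∈ (fun m => h * (m * y)) '' (K.1 : Set H) := by
          rw [← hhs2]; exact hkK
        obtain ⟨k2, h1, h2⟩ := hm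
        exact ⟨k2, h1, h2⟩
      have heq : y * k * y⁻¹ = k0⁻¹ * k2 := by
        rw [← hk2, hh]
        simp only [mul_assoc]
        rw [mul_inv_cancel₀ hy0, mul_one, mul_inv_cancel_left₀ hy0]
      rw [heq]
      exact hKmul _ (hKinv k0 hk0K hk00) _ hk2K
    exact hkbad (hconjall kb hkbK)
  · -- right type
    have hTK : parClass F H par K = rightClass F H K :=
      image_type_right hcenter hdim par hpar δ hbij.1 hδ1 hsq hadd hsmul hL1 hK hT
    have hyi0 : y⁻¹ ≠ 0 := inv_ne_zero hy0
    have hδx : δ (e.symm y⁻¹) = y⁻¹ := happ _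
    have hx0 : e.symm y⁻¹ ≠ 0 := by
      intro h0; apply hyi0; rw [← hδx, h0, hδ0]
    obtain ⟨M, hM⟩ := exists_right_line hdim _ hx0 L
    obtain ⟨M', hM'⟩ := exists_left_line hdim y⁻¹ hyi0 K
    have hMδ : (M'.1 : Set H) = δ '' (M.1 : Set H) := by
      rw [hM', hM, hK, Set.image_image, Set.image_image]
      apply Set.image_congr'
      intro m
      rw [hanti, hδx]
    have hparML : par M L := by
      have hmem : M ∈ rightClass F H L :=
        ⟨(e.symm y⁻¹)⁻¹, inv_ne_zero hx0, by rw [hM, img_right_cancel hx0]⟩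
      rw [← hT] at hmem
      exact hmem
    have hparM'K : par M' K := (hδpres M L M' K hMδ hK).mp hparML
    have hM'mem : M' ∈ rightClass F H K := by rw [← hTK]; exact hparM'K
    obtain ⟨h, hh0, hhs⟩ := hM'mem
    have hhs2 : (K.1 : Set H) = (fun m => (y⁻¹ * m) * h) '' (K.1 : Set H) := by
      conv_lhs => rw [hhs, hM']
      rw [Set.image_image]
    obtain ⟨k0, hk0K, hk0e⟩ : ∃ k0 ∈ (K.1 : Set H), (y⁻¹ * k0) * h = 1 := by
      have hm : (1:H) ∈ (fun m => (y⁻¹ * m) * h) '' (K.1 : Set H) := by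
        rw [← hhs2]; exact hK1
      obtain ⟨k0, h1, h2⟩ := hm
      exact ⟨k0, h1, h2⟩
    have hk00 : k0 ≠ 0 := by
      rintro rfl; rw [mul_zero, zero_mul] at hk0e; exact one_ne_zero hk0e.symm
    have hh : h = k0⁻¹ * y := by
      rw [eq_inv_of_mul_eq_one_right hk0e, mul_inv_rev, inv_inv]
    have hconjall : ∀ k ∈ K.1, y * k * y⁻¹ ∈ K.1 := by
      intro k hkK
      obtain ⟨k2, hk2K, hk2⟩ : ∃ k2 ∈ (K.1 : Set H), (y⁻¹ * k2) * h = k := by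
        have hm : k ∈ (fun m => (y⁻¹ * m) * h) '' (K.1 : Set H) := by
          rw [← hhs2]; exact hkK
        obtain ⟨k2, h1, h2⟩ := hm
        exact ⟨k2, h1, h2⟩
      have heq : y * k * y⁻¹ = k2 * k0⁻¹ := by
        rw [← hk2, hh]
        simp only [mul_assoc]
        rw [mul_inv_cancel₀ hy0, mul_one, mul_inv_cancel_left₀ hy0]
      rw [heq]
      exact hKmul _ hk2K _ (hKinv k0 hk0K hk00)
    exact hkbad (hconjall kb hkbK)

end CliffordAux

/-- Let `α₁` be an automorphism of `H` preserving a Clifford-like parallelism `∥`.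
Then every automorphism of `H` agreeing with `α₁` on `F·1` preserves `∥`, and no
antiautomorphism of `H` agreeing with `α₁` on `F·1` preserves `∥`. -/
theorem aut_antiAut_same_restriction
    (hcenter : CenterEqF F H) (hdim : Module.finrank F H = 4)
    (par : Line F H → Line F H → Prop) (hpar : IsCliffordLike F H par)
    (α₁ : H → H) (hα₁ : IsRingAutFn H α₁) (hpres : Preserves F H α₁ par) :
    (∀ α : H → H, IsRingAutFn H α →
      (∀ a : F, α (algebraMap F H a) = α₁ (algebraMap F H a)) →
      Preserves F H α par) ∧
    (∀ α : H → H, IsRingAntiAutFn H α →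
      (∀ a : F, α (algebraMap F H a) = α₁ (algebraMap F H a)) →
      ¬ Preserves F H α par) := by
  classical
  obtain ⟨hα₁bij, hα₁add, hα₁one, hα₁mul⟩ := hα₁
  set e₁ : H ≃ H := Equiv.ofBijective α₁ hα₁bij with he₁
  have happ₁ : ∀ x, α₁ (e₁.symm x) = x := by
    intro x; rw [he₁]; exact Equiv.ofBijective_apply_symm_apply α₁ hα₁bij x
  have hsymm₁ : ∀ x, e₁.symm (α₁ x) = x := by
    intro x; rw [he₁]; exact Equiv.ofBijective_symm_apply_apply α₁ hα₁bij x
  obtain ⟨σ, hσsurj, hσalg, hσsmul⟩ :=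
    CliffordAux.exists_sigma hcenter α₁ hα₁bij (Or.inl hα₁mul)
  have hsymm₁add : ∀ u v, e₁.symm (u + v) = e₁.symm u + e₁.symm v := by
    intro u v; apply hα₁bij.1; rw [hα₁add, happ₁, happ₁, happ₁]
  have hsymm₁mul : ∀ u v, e₁.symm (u * v) = e₁.symm u * e₁.symm v := by
    intro u v; apply hα₁bij.1; rw [hα₁mul, happ₁, happ₁, happ₁]
  constructor
  · -- automorphisms agreeing with α₁ on F·1 preserve ∥
    intro α hα hagree
    obtain ⟨hαbij, hαadd, hαone, hαmul⟩ := hα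
    set β : H → H := fun x => e₁.symm (α x) with hβ
    have hβbij : Function.Bijective β := e₁.symm.bijective.comp hαbij
    have hβadd : ∀ x y, β (x + y) = β x + β y := by
      intro x y
      simp only [hβ]
      rw [hαadd, hsymm₁add]
    have hβmul : ∀ x y, β (x * y) = β x * β y := by
      intro x y
      simp only [hβ]
      rw [hαmul, hsymm₁mul]
    have hβone : β 1 = 1 := by
      simp only [hβ]
      rw [hαone]
      conv_lhs => rw [← hα₁one]
      rw [hsymm₁]
    have hβfix : ∀ a : F, β (algebraMap F H a) = algebraMap F H a := by
      intro a
      simp only [hβ]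
      rw [hagree, hsymm₁]
    have hβsmul : ∀ (a : F) (x : H), β (a • x) = a • β x := by
      intro a x
      rw [Algebra.smul_def, hβmul, hβfix, ← Algebra.smul_def]
    have hβpres := CliffordAux.pres_full hcenter hdim par hpar β hβbij hβadd hβmul hβone hβsmul
    intro M N M' N' hM' hN'
    obtain ⟨Mb, hMb⟩ := CliffordAux.exists_lineImage hdim β hβbij hβadd id
      Function.surjective_id hβsmul M
    obtain ⟨Nb, hNb⟩ := CliffordAux.exists_lineImage hdim β hβbij hβadd id
      Function.surjective_id hβsmul N
    have hM'2 : (M'.1 : Set H) = α₁ '' (Mb.1 : Set H) := by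
      rw [hM', hMb, Set.image_image]
      exact Set.image_congr' (fun m => (happ₁ (α m)).symm)
    have hN'2 : (N'.1 : Set H) = α₁ '' (Nb.1 : Set H) := by
      rw [hN', hNb, Set.image_image]
      exact Set.image_congr' (fun m => (happ₁ (α m)).symm)
    exact (hβpres M N Mb Nb hMb hNb).trans (hpres Mb Nb M' N' hM'2 hN'2)
  · -- no antiautomorphism agreeing with α₁ on F·1 preserves ∥
    intro α hα hagree hcontra
    obtain ⟨hαbij, hαadd, hαone, hαmul⟩ := hα
    set δ : H → H := fun x => e₁.symm (α x) with hδ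
    have hδbij : Function.Bijective δ := e₁.symm.bijective.comp hαbij
    have hδadd : ∀ x y, δ (x + y) = δ x + δ y := by
      intro x y
      simp only [hδ]
      rw [hαadd, hsymm₁add]
    have hδanti : ∀ x y, δ (x * y) = δ y * δ x := by
      intro x y
      simp only [hδ]
      rw [hαmul, hsymm₁mul]
    have hδone : δ 1 = 1 := by
      simp only [hδ]
      rw [hαone]
      conv_lhs => rw [← hα₁one]
      rw [hsymm₁]
    have hδfix : ∀ a : F, δ (algebraMap F H a) = algebraMap F H a := by
      intro a
      simp only [hδ]
      rw [hagree, hsymm₁]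
    have hδsmul : ∀ (a : F) (x : H), δ (a • x) = a • δ x := by
      intro a x
      rw [Algebra.smul_def, hδanti, hδfix, ← Algebra.commutes, ← Algebra.smul_def]
    have hδpres : Preserves F H δ par := by
      intro M N M' N' hM' hN'
      obtain ⟨Ma, hMa⟩ := CliffordAux.exists_lineImage hdim α₁ hα₁bij hα₁add σ hσsurj hσsmul M'
      obtain ⟨Na, hNa⟩ := CliffordAux.exists_lineImage hdim α₁ hα₁bij hα₁add σ hσsurj hσsmul N'
      have hMa2 : (Ma.1 : Set H) = α '' (M.1 : Set H) := by
        rw [hMa, hM', Set.image_image]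
        exact Set.image_congr' (fun m => happ₁ (α m))
      have hNa2 : (Na.1 : Set H) = α '' (N.1 : Set H) := by
        rw [hNa, hN', Set.image_image]
        exact Set.image_congr' (fun m => happ₁ (α m))
      exact (hcontra M N Ma Na hMa2 hNa2).trans (hpres M' N' Ma Na hMa hNa).symm
    exact CliffordAux.anti_core hcenter hdim par hpar δ hδbij hδadd hδone hδanti hδsmul hδpres
end

section
/- For every line M of H, the orthogonal space M⊥ with respect to the form ⟨·,·⟩ is again a line, and M ∥ℓ M⊥ and M ∥r M⊥. -/
open Quaternion

/-- `M ∥ℓ N` : there is `g ≠ 0` with `N = g·M`. -/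
def LeftParQ {F : Type*} [Field F] {c₁ c₂ : F}
    (M N : Submodule F ℍ[F, c₁, c₂]) : Prop :=
  ∃ g : ℍ[F, c₁, c₂], g ≠ 0 ∧ (N : Set ℍ[F, c₁, c₂]) = (fun m => g * m) '' (M : Set ℍ[F, c₁, c₂])

/-- `M ∥r N` : there is `g ≠ 0` with `N = M·g`. -/
def RightParQ {F : Type*} [Field F] {c₁ c₂ : F}
    (M N : Submodule F ℍ[F, c₁, c₂]) : Prop :=
  ∃ g : ℍ[F, c₁, c₂], g ≠ 0 ∧ (N : Set ℍ[F, c₁, c₂]) = (fun m => m * g) '' (M : Set ℍ[F, c₁, c₂])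

namespace PerpAux
variable {F : Type*} [Field F] {c₁ c₂ : F}

lemma re_mul_comm (u v : ℍ[F, c₁, c₂]) : (u * v).re = (v * u).re := by
  simp only [QuaternionAlgebra.re_mul]; ring

lemma mul_star_self_coe (a : ℍ[F, c₁, c₂]) :
    a * star a = ((a * star a).re : ℍ[F, c₁, c₂]) := by
  ext <;> simp <;> ring

lemma star_mul_self_coe (a : ℍ[F, c₁, c₂]) :
    star a * a = (((star a * a).re : F) : ℍ[F, c₁, c₂]) := by
  have := mul_star_self_coe (star a)
  rwa [star_star] at this

lemma mul_cancel_unit {x y : ℍ[F, c₁, c₂]} (hx : IsUnit x) (h : x * y = 0) : y = 0 := by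
  obtain ⟨u, rfl⟩ := hx
  calc y = ↑u⁻¹ * (↑u * y) := by rw [← mul_assoc, Units.inv_mul, one_mul]
  _ = 0 := by rw [h, mul_zero]

lemma eq_zero_of_re_mul_star_self
    (hdiv : ∀ x : ℍ[F, c₁, c₂], x ≠ 0 → IsUnit x)
    {x : ℍ[F, c₁, c₂]} (h : (x * star x).re = 0) : x = 0 := by
  by_contra hx
  have h0 : x * star x = 0 := by rw [mul_star_self_coe, h]; simp
  have : star x = 0 := mul_cancel_unit (hdiv x hx) h0
  exact hx (by simpa using congrArg star this)

/-- the linear functional `y ↦ re (a * star y)`. -/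
def phi (a : ℍ[F, c₁, c₂]) : ℍ[F, c₁, c₂] →ₗ[F] F where
  toFun y := (a * star y).re
  map_add' y z := by simp [mul_add]
  map_smul' r y := by
    simp [QuaternionAlgebra.star_smul, mul_smul_comm, smul_eq_mul]

lemma phi_apply (a y : ℍ[F, c₁, c₂]) : phi a y = (a * star y).re := rfl

lemma star_eq_neg_of_re_zero {g : ℍ[F, c₁, c₂]} (hg : g.re = 0) : star g = -g := by
  ext <;> simp [hg]

open Classical in
/-- A nonzero pure quaternion `g` with `re (s*g) = 0 = re (star s * g)`. -/
noncomputable def pureSol (s : ℍ[F, c₁, c₂]) : ℍ[F, c₁, c₂] :=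
  if s.imI = 0 ∧ s.imJ = 0 then ⟨0, 1, 0, 0⟩ else ⟨0, c₂ * s.imJ, -(c₁ * s.imI), 0⟩

lemma pureSol_re (s : ℍ[F, c₁, c₂]) : (pureSol s).re = 0 := by
  unfold pureSol; split_ifs <;> rfl

lemma pureSol_ne_zero (hc₁ : c₁ ≠ 0) (hc₂ : c₂ ≠ 0) (s : ℍ[F, c₁, c₂]) :
    pureSol s ≠ 0 := by
  unfold pureSol
  split_ifs with h
  · intro hz
    have := congrArg QuaternionAlgebra.imI hz
    simp at this
  · intro hz
    push_neg at h
    have h1 := congrArg QuaternionAlgebra.imI hz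
    have h2 := congrArg QuaternionAlgebra.imJ hz
    simp [hc₁, hc₂] at h1 h2
    exact h h2 h1

lemma re_mul_pureSol (s : ℍ[F, c₁, c₂]) : (s * pureSol s).re = 0 := by
  unfold pureSol
  split_ifs with h
  · simp [QuaternionAlgebra.re_mul, h.1]
  · simp [QuaternionAlgebra.re_mul]; ring

lemma re_star_mul_pureSol (s : ℍ[F, c₁, c₂]) : (star s * pureSol s).re = 0 := by
  unfold pureSol
  split_ifs with h
  · simp [QuaternionAlgebra.re_mul, h.1]
  · simp [QuaternionAlgebra.re_mul]; ring

lemma re_left {g : ℍ[F, c₁, c₂]} (hg : g.re = 0) (x m : ℍ[F, c₁, c₂]) :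
    (x * star (g * m)).re = -((x * star m) * g).re := by
  rw [star_mul, star_eq_neg_of_re_zero hg, mul_neg, mul_neg, QuaternionAlgebra.re_neg,
    ← mul_assoc]

lemma re_right {h : ℍ[F, c₁, c₂]} (hh : h.re = 0) (x m : ℍ[F, c₁, c₂]) :
    (x * star (m * h)).re = -((star m * x) * h).re := by
  rw [star_mul, star_eq_neg_of_re_zero hh, neg_mul, mul_neg, QuaternionAlgebra.re_neg,
    ← mul_assoc, re_mul_comm, ← mul_assoc]

lemma re_coe_mul {r : F} {g : ℍ[F, c₁, c₂]} (hg : g.re = 0) :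
    (((r : ℍ[F, c₁, c₂])) * g).re = 0 := by
  simp [QuaternionAlgebra.re_mul, hg]

lemma re_comb_left (x m₁ m₂ g : ℍ[F, c₁, c₂]) (α β : F) :
    ((x * star (α • m₁ + β • m₂)) * g).re
      = α * ((x * star m₁) * g).re + β * ((x * star m₂) * g).re := by
  simp [star_add, QuaternionAlgebra.star_smul, mul_add, add_mul, smul_mul_assoc,
    mul_smul_comm, QuaternionAlgebra.re_smul, smul_eq_mul]

lemma re_comb_right (x m₁ m₂ h : ℍ[F, c₁, c₂]) (α β : F) :
    ((star (α • m₁ + β • m₂) * x) * h).re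
      = α * ((star m₁ * x) * h).re + β * ((star m₂ * x) * h).re := by
  simp [star_add, QuaternionAlgebra.star_smul, mul_add, add_mul, smul_mul_assoc,
    mul_smul_comm, QuaternionAlgebra.re_smul, smul_eq_mul]

lemma re_lin (m₁ m₂ y : ℍ[F, c₁, c₂]) (α β : F) :
    ((α • m₁ + β • m₂) * y).re = α * (m₁ * y).re + β * (m₂ * y).re := by
  simp [add_mul, smul_mul_assoc, QuaternionAlgebra.re_smul, smul_eq_mul]

end PerpAux


open PerpAux in
/-- For every line `M` of a quaternion skew field `H = ℍ[F, c₁, c₂]` (with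
`char F ≠ 2`), the orthogonal space `M⊥` with respect to the bilinear form
`⟨x, y⟩ = x·ȳ + y·x̄` is again a line, and `M ∥ℓ M⊥` as well as `M ∥r M⊥`. -/
theorem perp_line_left_and_right_parallel
    {F : Type*} [Field F] (h2 : (2 : F) ≠ 0) (c₁ c₂ : F)
    (hdiv : ∀ x : ℍ[F, c₁, c₂], x ≠ 0 → IsUnit x)
    (M : Submodule F ℍ[F, c₁, c₂]) (hM : Module.finrank F M = 2) :
    ∃ Mp : Submodule F ℍ[F, c₁, c₂], Module.finrank F Mp = 2 ∧
      (Mp : Set ℍ[F, c₁, c₂]) =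
        {y : ℍ[F, c₁, c₂] | ∀ x ∈ M, x * star y + y * star x = 0} ∧
      LeftParQ M Mp ∧ RightParQ M Mp := by
  classical
  -- nondegeneracy of the coefficients
  have hc₁ : c₁ ≠ 0 := by
    intro h
    have hi : (⟨0, 1, 0, 0⟩ : ℍ[F, c₁, c₂]) ≠ 0 := by
      intro hz; simpa using congrArg QuaternionAlgebra.imI hz
    have hmul : (⟨0, 1, 0, 0⟩ : ℍ[F, c₁, c₂]) * ⟨0, 1, 0, 0⟩ = 0 := by
      ext <;> simp [h]
    exact hi (mul_cancel_unit (hdiv _ hi) hmul)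
  have hc₂ : c₂ ≠ 0 := by
    intro h
    have hi : (⟨0, 0, 1, 0⟩ : ℍ[F, c₁, c₂]) ≠ 0 := by
      intro hz; simpa using congrArg QuaternionAlgebra.imJ hz
    have hmul : (⟨0, 0, 1, 0⟩ : ℍ[F, c₁, c₂]) * ⟨0, 0, 1, 0⟩ = 0 := by
      ext <;> simp [h]
    exact hi (mul_cancel_unit (hdiv _ hi) hmul)
  -- a basis of M
  let bas : Module.Basis (Fin 2) F M := Module.finBasisOfFinrankEq F M hM
  set a : ℍ[F, c₁, c₂] := ↑(bas 0) with ha_def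
  set b : ℍ[F, c₁, c₂] := ↑(bas 1) with hb_def
  have ha_mem : a ∈ M := (bas 0).2
  have hb_mem : b ∈ M := (bas 1).2
  have hmem : ∀ x : ℍ[F, c₁, c₂], x ∈ M ↔ ∃ α β : F, α • a + β • b = x := by
    intro x
    constructor
    · intro hx
      have h := bas.sum_repr ⟨x, hx⟩
      rw [Fin.sum_univ_two] at h
      refine ⟨bas.repr ⟨x, hx⟩ 0, bas.repr ⟨x, hx⟩ 1, ?_⟩
      have h' := congrArg Subtype.val h
      simpa only [Submodule.coe_add, SetLike.val_smul] using h'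
    · rintro ⟨α, β, rfl⟩
      exact M.add_mem (M.smul_mem _ ha_mem) (M.smul_mem _ hb_mem)
  -- the perp as a kernel
  set Φ : ℍ[F, c₁, c₂] →ₗ[F] F × F := (phi a).prod (phi b) with hΦ_def
  set K := LinearMap.ker Φ with hK_def
  have hKmem : ∀ y, y ∈ K ↔ (a * star y).re = 0 ∧ (b * star y).re = 0 := by
    intro y
    simp [hK_def, hΦ_def, LinearMap.mem_ker, LinearMap.prod_apply, phi_apply,
      Prod.ext_iff]
  -- finrank K = 2
  have hinj : ∀ x ∈ M, Φ x = 0 → x = 0 := by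
    intro x hx hx0
    obtain ⟨hA, hB⟩ := (hKmem x).1 hx0
    obtain ⟨α, β, rfl⟩ := (hmem x).1 hx
    refine eq_zero_of_re_mul_star_self hdiv (x := α • a + β • b) ?_
    rw [re_lin, hA, hB]; ring
  have hΨker : LinearMap.ker (Φ.comp M.subtype) = ⊥ := by
    rw [LinearMap.ker_eq_bot']
    intro m hm
    exact Subtype.ext (hinj ↑m m.2 (by simpa using hm))
  have hΨrange : LinearMap.range (Φ.comp M.subtype) = ⊤ := by
    apply Submodule.eq_top_of_finrank_eq
    rw [LinearMap.finrank_range_of_inj (LinearMap.ker_eq_bot.mp hΨker), hM,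
      Module.finrank_prod, Module.finrank_self]
  have hΦtop : LinearMap.range Φ = ⊤ :=
    top_le_iff.mp (hΨrange ▸ LinearMap.range_comp_le_range M.subtype Φ)
  have hK2 : Module.finrank F K = 2 := by
    have hr := LinearMap.finrank_range_add_finrank_ker Φ
    rw [hΦtop, finrank_top, Module.finrank_prod, Module.finrank_self,
      QuaternionAlgebra.finrank_eq_four] at hr
    rw [hK_def]
    omega
  -- the left multiplier g
  set s : ℍ[F, c₁, c₂] := a * star b with hs_def
  set g : ℍ[F, c₁, c₂] := pureSol s with hg_def
  have hgre : g.re = 0 := pureSol_re s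
  have hg0 : g ≠ 0 := pureSol_ne_zero hc₁ hc₂ s
  -- the right multiplier h
  set t : ℍ[F, c₁, c₂] := star a * b with ht_def
  set h : ℍ[F, c₁, c₂] := pureSol t with hh_def
  have hhre : h.re = 0 := pureSol_re t
  have hh0 : h ≠ 0 := pureSol_ne_zero hc₁ hc₂ t
  -- the four re-vanishing facts for g
  have hgaa : ((a * star a) * g).re = 0 := by rw [mul_star_self_coe]; exact re_coe_mul hgre
  have hgbb : ((b * star b) * g).re = 0 := by rw [mul_star_self_coe]; exact re_coe_mul hgre
  have hgab : ((a * star b) * g).re = 0 := re_mul_pureSol s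
  have hgba : ((b * star a) * g).re = 0 := by
    have : b * star a = star s := by rw [hs_def, star_mul, star_star]
    rw [this]; exact re_star_mul_pureSol s
  -- the four re-vanishing facts for h
  have hhaa : ((star a * a) * h).re = 0 := by rw [star_mul_self_coe]; exact re_coe_mul hhre
  have hhbb : ((star b * b) * h).re = 0 := by rw [star_mul_self_coe]; exact re_coe_mul hhre
  have hhab : ((star a * b) * h).re = 0 := re_mul_pureSol t
  have hhba : ((star b * a) * h).re = 0 := by
    have : star b * a = star t := by rw [ht_def, star_mul, star_star]
    rw [this]; exact re_star_mul_pureSol t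
  -- the submodules g•M and M•h
  set Mp := Submodule.map (LinearMap.mulLeft F g) M with hMp_def
  set Mq := Submodule.map (LinearMap.mulRight F h) M with hMq_def
  have hMpK : Mp ≤ K := by
    rintro _ ⟨m, hm, rfl⟩
    rw [LinearMap.mulLeft_apply, hKmem]
    obtain ⟨α, β, rfl⟩ := (hmem m).1 hm
    constructor
    · rw [re_left hgre, re_comb_left, hgaa, hgab]; ring
    · rw [re_left hgre, re_comb_left, hgba, hgbb]; ring
  have hMqK : Mq ≤ K := by
    rintro _ ⟨m, hm, rfl⟩
    rw [LinearMap.mulRight_apply, hKmem]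
    obtain ⟨α, β, rfl⟩ := (hmem m).1 hm
    constructor
    · rw [re_right hhre, re_comb_right, hhaa, hhba]; ring
    · rw [re_right hhre, re_comb_right, hhab, hhbb]; ring
  -- finrank of Mp and Mq
  obtain ⟨ug, hug⟩ := hdiv g hg0
  obtain ⟨uh, huh⟩ := hdiv h hh0
  let eg : ℍ[F, c₁, c₂] ≃ₗ[F] ℍ[F, c₁, c₂] :=
    LinearEquiv.ofLinear (LinearMap.mulLeft F g) (LinearMap.mulLeft F (↑ug⁻¹ : ℍ[F, c₁, c₂]))
      (LinearMap.ext fun y => by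
        show g * ((↑ug⁻¹ : ℍ[F, c₁, c₂]) * y) = y
        rw [← mul_assoc, ← hug, Units.mul_inv, one_mul])
      (LinearMap.ext fun y => by
        show (↑ug⁻¹ : ℍ[F, c₁, c₂]) * (g * y) = y
        rw [← mul_assoc, ← hug, Units.inv_mul, one_mul])
  let eh : ℍ[F, c₁, c₂] ≃ₗ[F] ℍ[F, c₁, c₂] :=
    LinearEquiv.ofLinear (LinearMap.mulRight F h) (LinearMap.mulRight F (↑uh⁻¹ : ℍ[F, c₁, c₂]))
      (LinearMap.ext fun y => by
        show (y * (↑uh⁻¹ : ℍ[F, c₁, c₂])) * h = y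
        rw [mul_assoc, ← huh, Units.inv_mul, mul_one])
      (LinearMap.ext fun y => by
        show (y * h) * (↑uh⁻¹ : ℍ[F, c₁, c₂]) = y
        rw [mul_assoc, ← huh, Units.mul_inv, mul_one])
  have hMp2 : Module.finrank F Mp = 2 := by
    have : Mp = Submodule.map (eg : ℍ[F, c₁, c₂] →ₗ[F] ℍ[F, c₁, c₂]) M := rfl
    rw [this]
    rw [LinearEquiv.finrank_map_eq eg M, hM]
  have hMq2 : Module.finrank F Mq = 2 := by
    have : Mq = Submodule.map (eh : ℍ[F, c₁, c₂] →ₗ[F] ℍ[F, c₁, c₂]) M := rfl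
    rw [this]
    rw [LinearEquiv.finrank_map_eq eh M, hM]
  -- Mp = K = Mq
  have hMpEq : Mp = K := Submodule.eq_of_le_of_finrank_le hMpK (by rw [hK2, hMp2])
  have hMqEq : Mq = K := Submodule.eq_of_le_of_finrank_le hMqK (by rw [hK2, hMq2])
  -- the perp set description
  have hset : (K : Set ℍ[F, c₁, c₂]) =
      {y : ℍ[F, c₁, c₂] | ∀ x ∈ M, x * star y + y * star x = 0} := by
    ext y
    simp only [SetLike.mem_coe, hKmem, Set.mem_setOf_eq]
    constructor
    · rintro ⟨hA, hB⟩ x hx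
      obtain ⟨α, β, rfl⟩ := (hmem x).1 hx
      have hre : ((α • a + β • b) * star y).re = 0 := by rw [re_lin, hA, hB]; ring
      have hsum : (α • a + β • b) * star y + y * star (α • a + β • b)
          = ((2 * ((α • a + β • b) * star y).re : F) : ℍ[F, c₁, c₂]) := by
        have hsa := QuaternionAlgebra.self_add_star' ((α • a + β • b) * star y)
        rw [zero_mul, add_zero] at hsa
        rw [← hsa]
        congr 1
        rw [star_mul, star_star]
      rw [hsum, hre]
      simp
    · intro hy
      have key : ∀ x ∈ M, (x * star y).re = 0 := by
        intro x hx
        have hz := hy x hx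
        have hcoe : ((2 * (x * star y).re : F) : ℍ[F, c₁, c₂]) = 0 := by
          have hsa := QuaternionAlgebra.self_add_star' (x * star y)
          rw [zero_mul, add_zero] at hsa
          rw [← hsa]
          rw [← hz]
          congr 1
          rw [star_mul, star_star]
        have h20 : 2 * (x * star y).re = 0 := by
          apply QuaternionAlgebra.coe_injective
          simpa using hcoe
        exact (mul_eq_zero.mp h20).resolve_left h2
      exact ⟨key a ha_mem, key b hb_mem⟩
  refine ⟨Mp, hMp2, by rw [hMpEq]; exact hset, ⟨g, hg0, ?_⟩, ⟨h, hh0, ?_⟩⟩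
  · rw [hMp_def]
    rw [Submodule.map_coe]
    rfl
  · rw [hMpEq, ← hMqEq, hMq_def, Submodule.map_coe]
    rfl
end

section
/- Let α be a ring automorphism of H, let h ∈ H with h ≠ 0, and let L be a 2-dimensional F-subspace of H containing 1 (a maximal commutative subfield of H) such that α(L) = h⁻¹·L·h as subsets of H. Then for every q ∈ L with q ≠ 0 and q + star q = 0, there exists c ∈ F with c ≠ 0 such that c²·N(q) = N(α(q)), i.e., c²·(q·star q) = α(q)·star(α(q)) in H. -/
open Quaternion

section Aux

variable {F : Type*} [Field F] {c₁ c₂ : F}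

/-- re of a product is symmetric. -/
private lemma aux_re_mul_comm (a b : ℍ[F,c₁,c₂]) : (a * b).re = (b * a).re := by
  simp only [QuaternionAlgebra.re_mul]; ring

/-- An element commuting with everything is a scalar. -/
private lemma aux_central_eq (h2 : (2 : F) ≠ 0) (hc₁ : c₁ ≠ 0)
    (x : ℍ[F,c₁,c₂]) (hx : ∀ z, x * z = z * x) :
    x = ((x.re : F) : ℍ[F,c₁,c₂]) := by
  have hi := hx ⟨0,1,0,0⟩
  have hj := hx ⟨0,0,1,0⟩
  have h1 := congrArg QuaternionAlgebra.imK hi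
  have h2' := congrArg QuaternionAlgebra.imJ hi
  have h3 := congrArg QuaternionAlgebra.imK hj
  simp only [QuaternionAlgebra.imK_mul, QuaternionAlgebra.imJ_mul] at h1 h2' h3
  have hJ : x.imJ = 0 := by
    have : 2 * x.imJ = 0 := by linear_combination -h1
    exact (mul_eq_zero.mp this).resolve_left h2
  have hK : x.imK = 0 := by
    have : c₁ * (2 * x.imK) = 0 := by linear_combination -h2'
    have := (mul_eq_zero.mp this).resolve_left hc₁
    exact (mul_eq_zero.mp this).resolve_left h2
  have hI : x.imI = 0 := by
    have : 2 * x.imI = 0 := by linear_combination h3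
    exact (mul_eq_zero.mp this).resolve_left h2
  ext <;> simp [hI, hJ, hK]

end Aux

/-- Let `α` be a ring automorphism of a quaternion skew field `H = ℍ[F, c₁, c₂]`
(with `char F ≠ 2`), let `h ≠ 0`, and let `L` be a maximal commutative subfield of
`H` (a 2-dimensional `F`-subspace containing `1`) such that `α(L) = h⁻¹·L·h`.
Then for every `q ∈ L` with `q ≠ 0` and `tr q = q + q̄ = 0` there exists `c ∈ F`,
`c ≠ 0`, such that `c²·N(q) = N(α q)`, i.e. `c² • (q·q̄) = α q · (α q)‾`. -/
theorem exists_norm_ratio_square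
    {F : Type*} [Field F] (h2 : (2 : F) ≠ 0) (c₁ c₂ : F)
    (hdiv : ∀ x : ℍ[F, c₁, c₂], x ≠ 0 → IsUnit x)
    (α : ℍ[F, c₁, c₂] ≃+* ℍ[F, c₁, c₂])
    (h : ℍ[F, c₁, c₂]) (hh : h ≠ 0)
    (L : Submodule F ℍ[F, c₁, c₂]) (hdim : Module.finrank F L = 2)
    (hone : (1 : ℍ[F, c₁, c₂]) ∈ L)
    (hconj : (⇑α) '' (L : Set ℍ[F, c₁, c₂]) =
      (fun z => Ring.inverse h * z * h) '' (L : Set ℍ[F, c₁, c₂])) :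
    ∀ q ∈ L, q ≠ 0 → q + star q = 0 →
      ∃ c : F, c ≠ 0 ∧ (c ^ 2) • (q * star q) = α q * star (α q) := by
  intro q hqL hq0 htr
  -- basic facts
  have hone' : (1 : F) ≠ 0 := fun h1 => h2 (by rw [show (2:F) = 2 * 1 by ring, h1, mul_zero])
  have hc₁ : c₁ ≠ 0 := by
    intro hc
    have hi0 : (⟨0,1,0,0⟩ : ℍ[F,c₁,c₂]) ≠ 0 := by
      intro h0
      exact hone' (congrArg QuaternionAlgebra.imI h0)
    have hiu := hdiv _ hi0
    have hsq : (⟨0,1,0,0⟩ : ℍ[F,c₁,c₂]) * ⟨0,1,0,0⟩ = 0 := by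
      ext <;> simp [hc]
    obtain ⟨u, hu⟩ := hiu
    have : (⟨0,1,0,0⟩ : ℍ[F,c₁,c₂]) = 0 := by
      calc (⟨0,1,0,0⟩ : ℍ[F,c₁,c₂]) = (↑u⁻¹ * ↑u) * ⟨0,1,0,0⟩ := by
            simp
        _ = ↑u⁻¹ * ((⟨0,1,0,0⟩ : ℍ[F,c₁,c₂]) * ⟨0,1,0,0⟩) := by rw [hu, mul_assoc]
        _ = 0 := by rw [hsq, mul_zero]
    exact hi0 this
  have hsq : star q = -q := eq_neg_of_add_eq_zero_right htr
  have hqre : q.re = 0 := by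
    have := congrArg QuaternionAlgebra.re htr
    simp only [QuaternionAlgebra.re_add, QuaternionAlgebra.re_star,
      QuaternionAlgebra.re_zero] at this
    have h2q : 2 * q.re = 0 := by linear_combination this
    exact (mul_eq_zero.mp h2q).resolve_left h2
  -- norm of q as a scalar
  set n : F := (q * star q).re with hn
  have hqq : q * star q = ((n : F) : ℍ[F,c₁,c₂]) := QuaternionAlgebra.mul_star_eq_coe q
  have hq2 : q * q = ((-n : F) : ℍ[F,c₁,c₂]) := by
    have : q * q = -(q * star q) := by rw [hsq, mul_neg, neg_neg]
    rw [this, hqq]; push_cast; ring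
  -- α q squared is central
  have hy2 : α q * α q = α (((-n : F) : ℍ[F,c₁,c₂])) := by rw [← map_mul, hq2]
  have hy2c : ∀ z : ℍ[F,c₁,c₂], (α q * α q) * z = z * (α q * α q) := by
    intro z
    rw [hy2]
    calc α ((-n : F) : ℍ[F,c₁,c₂]) * z = α ((-n : F) : ℍ[F,c₁,c₂]) * α (α.symm z) := by simp
      _ = α (((-n : F) : ℍ[F,c₁,c₂]) * α.symm z) := by rw [map_mul]
      _ = α (α.symm z * ((-n : F) : ℍ[F,c₁,c₂])) := by rw [QuaternionAlgebra.coe_commutes]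
      _ = z * α ((-n : F) : ℍ[F,c₁,c₂]) := by rw [map_mul]; simp
  have hy2eq := aux_central_eq h2 hc₁ _ hy2c
  -- α q is pure imaginary
  have hyre : (α q).re = 0 := by
    by_contra hre
    have hI : (α q).imI = 0 := by
      have := congrArg QuaternionAlgebra.imI hy2eq
      simp only [QuaternionAlgebra.imI_mul, QuaternionAlgebra.imI_coe] at this
      have h0 : 2 * ((α q).re * (α q).imI) = 0 := by linear_combination this
      have := (mul_eq_zero.mp h0).resolve_left h2
      exact (mul_eq_zero.mp this).resolve_left hre
    have hJ : (α q).imJ = 0 := by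
      have := congrArg QuaternionAlgebra.imJ hy2eq
      simp only [QuaternionAlgebra.imJ_mul, QuaternionAlgebra.imJ_coe] at this
      have h0 : 2 * ((α q).re * (α q).imJ) = 0 := by linear_combination this
      have := (mul_eq_zero.mp h0).resolve_left h2
      exact (mul_eq_zero.mp this).resolve_left hre
    have hK : (α q).imK = 0 := by
      have := congrArg QuaternionAlgebra.imK hy2eq
      simp only [QuaternionAlgebra.imK_mul, QuaternionAlgebra.imK_coe] at this
      have h0 : 2 * ((α q).re * (α q).imK) = 0 := by linear_combination this
      have := (mul_eq_zero.mp h0).resolve_left h2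
      exact (mul_eq_zero.mp this).resolve_left hre
    -- then α q is central, hence q is central, hence q = 0
    have hyc : α q = (((α q).re : F) : ℍ[F,c₁,c₂]) := by ext <;> simp [hI, hJ, hK]
    have hqc : ∀ z : ℍ[F,c₁,c₂], q * z = z * q := by
      intro z
      have : q = α.symm (((α q).re : F) : ℍ[F,c₁,c₂]) := by rw [← hyc]; simp
      calc q * z = α.symm (α q * α z) := by rw [map_mul]; simp
        _ = α.symm ((((α q).re : F) : ℍ[F,c₁,c₂]) * α z) := by rw [← hyc]
        _ = α.symm (α z * (((α q).re : F) : ℍ[F,c₁,c₂])) := by rw [QuaternionAlgebra.coe_commutes]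
        _ = z * q := by rw [← hyc, map_mul]; simp
    have := aux_central_eq h2 hc₁ q hqc
    rw [hqre] at this
    simp only [QuaternionAlgebra.coe_zero] at this
    exact hq0 this
  have hystar : star (α q) = -(α q) := by
    ext <;> simp [hyre]
  -- get p ∈ L with α q = h⁻¹ p h
  have hmem : α q ∈ (fun z => Ring.inverse h * z * h) '' (L : Set ℍ[F,c₁,c₂]) := by
    rw [← hconj]; exact ⟨q, hqL, rfl⟩
  obtain ⟨p, hpL, hp⟩ := hmem
  replace hp : Ring.inverse h * p * h = α q := hp
  have hhu : IsUnit h := hdiv h hh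
  have hinv_mul : Ring.inverse h * h = 1 := Ring.inverse_mul_cancel h hhu
  have hmul_inv : h * Ring.inverse h = 1 := Ring.mul_inverse_cancel h hhu
  -- p is pure imaginary
  have hpre : p.re = 0 := by
    have : (Ring.inverse h * p * h).re = p.re := by
      rw [aux_re_mul_comm, ← mul_assoc, hmul_inv, one_mul]
    rw [hp] at this
    rw [← this, hyre]
  -- p ≠ 0
  have hy0 : α q ≠ 0 := by
    intro h0
    exact hq0 (by simpa using congrArg α.symm h0)
  have hp0 : p ≠ 0 := by
    intro h0
    rw [h0, mul_zero, zero_mul] at hp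
    exact hy0 hp.symm
  -- linear algebra : p = b • q
  have hfd : FiniteDimensional F L := FiniteDimensional.of_finrank_pos (by rw [hdim]; norm_num)
  have hnli : ¬ LinearIndependent F (![⟨1, hone⟩, ⟨q, hqL⟩, ⟨p, hpL⟩] : Fin 3 → L) := by
    intro hli
    have := hli.fintype_card_le_finrank
    rw [hdim] at this
    simp at this
  obtain ⟨g, hsum, i, hgi⟩ := Fintype.not_linearIndependent_iff.mp hnli
  have hsum' : g 0 • (1 : ℍ[F,c₁,c₂]) + g 1 • q + g 2 • p = 0 := by
    have := congrArg (Subtype.val : L → ℍ[F,c₁,c₂]) hsum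
    rw [Submodule.coe_sum] at this
    simpa [Fin.sum_univ_three] using this
  have hg0 : g 0 = 0 := by
    have := congrArg QuaternionAlgebra.re hsum'
    simpa [hqre, hpre] using this
  rw [hg0, zero_smul, zero_add] at hsum'
  have hg2 : g 2 ≠ 0 := by
    intro h0
    rw [h0, zero_smul, add_zero] at hsum'
    have hg1 : g 1 = 0 := by
      rcases smul_eq_zero.mp hsum' with h1 | h1
      · exact h1
      · exact absurd h1 hq0
    fin_cases i
    · exact hgi hg0
    · exact hgi hg1
    · exact hgi h0
  set b : F := -((g 2)⁻¹ * g 1) with hb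
  have hpb : p = b • q := by
    have h1 : g 2 • p = -(g 1 • q) := eq_neg_of_add_eq_zero_right hsum'
    have h2' : p = (g 2)⁻¹ • (g 2 • p) := by
      rw [smul_smul, inv_mul_cancel₀ hg2, one_smul]
    rw [h2', h1, smul_neg, smul_smul, hb, neg_smul]
  have hb0 : b ≠ 0 := by
    intro h0
    rw [h0, zero_smul] at hpb
    exact hp0 hpb
  refine ⟨b, hb0, ?_⟩
  -- final computation
  have hpp : p * p = (b * b) • (q * q) := by
    rw [hpb, smul_mul_smul_comm]
  have hyy : α q * α q = Ring.inverse h * (p * p) * h := by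
    rw [← hp]
    calc Ring.inverse h * p * h * (Ring.inverse h * p * h)
        = Ring.inverse h * p * (h * Ring.inverse h) * p * h := by noncomm_ring
      _ = Ring.inverse h * (p * p) * h := by rw [hmul_inv]; noncomm_ring
  have key : α q * α q = (b * b) • ((-n : F) : ℍ[F,c₁,c₂]) := by
    rw [hyy, hpp, hq2]
    rw [mul_smul_comm, smul_mul_assoc]
    congr 1
    rw [mul_assoc, QuaternionAlgebra.coe_commutes, ← mul_assoc, hinv_mul, one_mul]
  rw [hystar, mul_neg, key, hqq, QuaternionAlgebra.coe_neg, smul_neg, neg_neg, pow_two]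
end

section
/- For all x, y ∈ F one has x² + x·y + y² ≠ t + u. (Hence t + u is not a norm of the quadratic extension F(i) with i² + i + 1 = 0, so the quaternion algebra (F(i)/F, t + u) is a division ring.) -/
open Polynomial

private lemma zmod2_one : ∀ u : ZMod 2, u ≠ 0 → u = 1 := by decide

private lemma aux_ne (a b : Polynomial (ZMod 2)) (hd : b.natDegree ≤ a.natDegree)
    (ha : a ≠ 0) (hb : b ≠ 0) : a ^ 2 + a * b + b ^ 2 ≠ 0 := by
  intro h
  have la : a.leadingCoeff = 1 := zmod2_one _ (leadingCoeff_ne_zero.mpr ha)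
  have lb : b.leadingCoeff = 1 := zmod2_one _ (leadingCoeff_ne_zero.mpr hb)
  have hcoeff := congrArg (fun p => Polynomial.coeff p (a.natDegree + a.natDegree)) h
  simp only [coeff_add, coeff_zero] at hcoeff
  have ha2 : (a ^ 2).coeff (a.natDegree + a.natDegree) = 1 := by
    rw [sq, coeff_mul_degree_add_degree, la, one_mul]
  rcases lt_or_eq_of_le hd with hlt | heq
  · have hab : (a * b).coeff (a.natDegree + a.natDegree) = 0 :=
      coeff_eq_zero_of_natDegree_lt (lt_of_le_of_lt natDegree_mul_le (by omega))
    have hb2 : (b ^ 2).coeff (a.natDegree + a.natDegree) = 0 :=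
      coeff_eq_zero_of_natDegree_lt (by
        calc (b ^ 2).natDegree ≤ b.natDegree + b.natDegree := by
              rw [sq]; exact natDegree_mul_le
          _ < _ := by omega)
    rw [ha2, hab, hb2] at hcoeff
    exact absurd hcoeff (by decide)
  · have hab : (a * b).coeff (a.natDegree + a.natDegree) = 1 := by
      conv_lhs => rw [show a.natDegree + a.natDegree = a.natDegree + b.natDegree by omega]
      rw [coeff_mul_degree_add_degree, la, lb, one_mul]
    have hb2 : (b ^ 2).coeff (a.natDegree + a.natDegree) = 1 := by
      rw [sq, show a.natDegree + a.natDegree = b.natDegree + b.natDegree by omega,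
        coeff_mul_degree_add_degree, lb, one_mul]
    rw [ha2, hab, hb2] at hcoeff
    exact absurd hcoeff (by decide)

private lemma lemA {a b : Polynomial (ZMod 2)} (h : a ^ 2 + a * b + b ^ 2 = 0) :
    a = 0 ∧ b = 0 := by
  by_cases ha : a = 0
  · subst ha
    simp only [ne_eq, OfNat.ofNat_ne_zero, not_false_eq_true, zero_pow, zero_mul, add_zero,
      zero_add] at h
    exact ⟨rfl, by simpa using pow_eq_zero_iff (two_ne_zero) |>.mp h⟩
  · by_cases hb : b = 0
    · subst hb
      simp only [ne_eq, OfNat.ofNat_ne_zero, not_false_eq_true, zero_pow, mul_zero, add_zero] at h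
      exact absurd (pow_eq_zero_iff (two_ne_zero) |>.mp h) ha
    · rcases le_total b.natDegree a.natDegree with hd | hd
      · exact absurd h (aux_ne a b hd ha hb)
      · exact absurd (by rw [← h]; ring) (aux_ne b a hd hb ha)


private lemma p_dvd_iff (q : (Polynomial (ZMod 2))[X]) :
    Polynomial.X + Polynomial.C (Polynomial.X : Polynomial (ZMod 2)) ∣ q ↔
      q.eval Polynomial.X = 0 := by
  have hpe : (Polynomial.X + Polynomial.C (Polynomial.X : Polynomial (ZMod 2)))
      = Polynomial.X - Polynomial.C Polynomial.X := by
    rw [sub_eq_add_neg, CharTwo.neg_eq]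
  rw [hpe, Polynomial.dvd_iff_isRoot]
  rfl

private lemma descent_step (c : (Polynomial (ZMod 2))[X]) (hc : c ≠ 0)
    (a b : (Polynomial (ZMod 2))[X])
    (h : a ^ 2 + a * b + b ^ 2 = (Polynomial.X + Polynomial.C Polynomial.X) * c ^ 2) :
    ∃ c' a' b' : (Polynomial (ZMod 2))[X], c' ≠ 0 ∧ c.natDegree = c'.natDegree + 1 ∧
      a' ^ 2 + a' * b' + b' ^ 2 = (Polynomial.X + Polynomial.C Polynomial.X) * c' ^ 2 := by
  set p : (Polynomial (ZMod 2))[X] := Polynomial.X + Polynomial.C Polynomial.X with hp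
  have hp0 : p ≠ 0 := Polynomial.X_add_C_ne_zero _
  have heval : (a ^ 2 + a * b + b ^ 2).eval Polynomial.X = 0 :=
    (p_dvd_iff _).mp ⟨c ^ 2, h⟩
  simp only [eval_add, eval_mul, eval_pow] at heval
  obtain ⟨ea, eb⟩ := lemA heval
  obtain ⟨a', rfl⟩ := (p_dvd_iff a).mpr ea
  obtain ⟨b', rfl⟩ := (p_dvd_iff b).mpr eb
  have h1 : p * (p * (a' ^ 2 + a' * b' + b' ^ 2)) = p * c ^ 2 := by rw [← h]; ring
  have h2 : p * (a' ^ 2 + a' * b' + b' ^ 2) = c ^ 2 := mul_left_cancel₀ hp0 h1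
  have hceval : c.eval Polynomial.X = 0 := by
    have : (c ^ 2).eval Polynomial.X = 0 := by rw [← h2]; simp [hp, CharTwo.add_self_eq_zero]
    simpa [pow_eq_zero_iff] using this
  obtain ⟨c', rfl⟩ := (p_dvd_iff c).mpr hceval
  have hc' : c' ≠ 0 := by rintro rfl; simp at hc
  refine ⟨c', a', b', hc', ?_, ?_⟩
  · rw [Polynomial.natDegree_mul hp0 hc', hp, natDegree_X_add_C, add_comm]
  · have h3 : p * (a' ^ 2 + a' * b' + b' ^ 2) = p * (p * c' ^ 2) := by rw [h2]; ring
    exact mul_left_cancel₀ hp0 h3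

private lemma descent : ∀ n : ℕ, ∀ c : (Polynomial (ZMod 2))[X], c.natDegree ≤ n → c ≠ 0 →
    ∀ a b : (Polynomial (ZMod 2))[X],
      a ^ 2 + a * b + b ^ 2 = (Polynomial.X + Polynomial.C Polynomial.X) * c ^ 2 → False := by
  intro n
  induction n with
  | zero =>
    intro c hcd hc a b h
    obtain ⟨c', a', b', hc', hdeg, -⟩ := descent_step c hc a b h
    omega
  | succ n ih =>
    intro c hcd hc a b h
    obtain ⟨c', a', b', hc', hdeg, h'⟩ := descent_step c hc a b h
    exact ih c' (by omega) hc' a' b' h'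


noncomputable def E : MvPolynomial (Fin 2) (ZMod 2) ≃+* (Polynomial (ZMod 2))[X] :=
  (MvPolynomial.finSuccEquiv (ZMod 2) 1).toRingEquiv.trans
    (Polynomial.mapEquiv ((MvPolynomial.finSuccEquiv (ZMod 2) 0).toRingEquiv.trans
      (Polynomial.mapEquiv (MvPolynomial.isEmptyRingEquiv (ZMod 2) (Fin 0)))))

lemma E_X0 : E (MvPolynomial.X 0) = Polynomial.X := by
  rw [E, RingEquiv.trans_apply]
  rw [show ((MvPolynomial.finSuccEquiv (ZMod 2) 1).toRingEquiv (MvPolynomial.X 0)) =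
    Polynomial.X from MvPolynomial.finSuccEquiv_X_zero]
  simp [Polynomial.mapEquiv]

lemma E_X1 : E (MvPolynomial.X 1) = Polynomial.C Polynomial.X := by
  rw [E, RingEquiv.trans_apply]
  rw [show ((MvPolynomial.finSuccEquiv (ZMod 2) 1).toRingEquiv (MvPolynomial.X 1)) =
    Polynomial.C (MvPolynomial.X 0) by
      rw [show (1 : Fin 2) = Fin.succ 0 from rfl]
      exact MvPolynomial.finSuccEquiv_X_succ]
  rw [Polynomial.mapEquiv_apply, Polynomial.map_C]
  congr 1
  simp only [RingHom.coe_coe, RingEquiv.trans_apply]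
  rw [show ((MvPolynomial.finSuccEquiv (ZMod 2) 0).toRingEquiv (MvPolynomial.X 0)) =
    Polynomial.X from MvPolynomial.finSuccEquiv_X_zero]
  rw [Polynomial.mapEquiv_apply, Polynomial.map_X]

set_option synthInstance.maxHeartbeats 800000 in
set_option maxHeartbeats 1600000 in
/-- In the rational function field `F = 𝔽₂(t, u)` in two indeterminates over the
field with two elements, `t + u` is not represented by the quadratic form
`x² + x·y + y²` (the norm form of the separable quadratic extension `F(i)` with
`i² + i + 1 = 0`); hence the quaternion algebra `(F(i)/F, t + u)` is a division
ring. -/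
theorem not_norm_of_sep_ext
    (x y : FractionRing (MvPolynomial (Fin 2) (ZMod 2))) :
    x ^ 2 + x * y + y ^ 2 ≠
      algebraMap (MvPolynomial (Fin 2) (ZMod 2))
          (FractionRing (MvPolynomial (Fin 2) (ZMod 2))) (MvPolynomial.X 0) +
        algebraMap (MvPolynomial (Fin 2) (ZMod 2))
          (FractionRing (MvPolynomial (Fin 2) (ZMod 2))) (MvPolynomial.X 1) := by
  intro h
  obtain ⟨a, s, hs, hx⟩ := IsFractionRing.div_surjective (A := MvPolynomial (Fin 2) (ZMod 2)) x
  obtain ⟨b, t, ht, hy⟩ := IsFractionRing.div_surjective (A := MvPolynomial (Fin 2) (ZMod 2)) y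
  have hs0 : s ≠ 0 := nonZeroDivisors.ne_zero hs
  have ht0 : t ≠ 0 := nonZeroDivisors.ne_zero ht
  have hfs : algebraMap _ (FractionRing (MvPolynomial (Fin 2) (ZMod 2))) s ≠ 0 := by
    simpa using (map_ne_zero_iff (algebraMap _ (FractionRing (MvPolynomial (Fin 2) (ZMod 2)))) (IsFractionRing.injective (MvPolynomial (Fin 2) (ZMod 2)) (FractionRing (MvPolynomial (Fin 2) (ZMod 2))))).mpr hs0
  have hft : algebraMap _ (FractionRing (MvPolynomial (Fin 2) (ZMod 2))) t ≠ 0 := by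
    simpa using (map_ne_zero_iff (algebraMap _ (FractionRing (MvPolynomial (Fin 2) (ZMod 2)))) (IsFractionRing.injective (MvPolynomial (Fin 2) (ZMod 2)) (FractionRing (MvPolynomial (Fin 2) (ZMod 2))))).mpr ht0
  rw [← hx, ← hy] at h
  have key : algebraMap _ (FractionRing (MvPolynomial (Fin 2) (ZMod 2))) (s * t * ((a * t) ^ 2 + (a * t) * (b * s) + (b * s) ^ 2))
      = algebraMap _ (FractionRing (MvPolynomial (Fin 2) (ZMod 2))) (s * t * ((MvPolynomial.X 0 + MvPolynomial.X 1) * (s * t) ^ 2)) := by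
    simp only [map_add, map_mul, map_pow]
    field_simp at h
    linear_combination (algebraMap (MvPolynomial (Fin 2) (ZMod 2)) (FractionRing (MvPolynomial (Fin 2) (ZMod 2))) s * algebraMap (MvPolynomial (Fin 2) (ZMod 2)) (FractionRing (MvPolynomial (Fin 2) (ZMod 2))) t) * h
  have heq0 : s * t * ((a * t) ^ 2 + (a * t) * (b * s) + (b * s) ^ 2)
      = s * t * ((MvPolynomial.X 0 + MvPolynomial.X 1) * (s * t) ^ 2) :=
    IsFractionRing.injective (MvPolynomial (Fin 2) (ZMod 2)) (FractionRing (MvPolynomial (Fin 2) (ZMod 2))) key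
  have heq : (a * t) ^ 2 + (a * t) * (b * s) + (b * s) ^ 2
      = (MvPolynomial.X 0 + MvPolynomial.X 1) * (s * t) ^ 2 :=
    mul_left_cancel₀ (mul_ne_zero hs0 ht0) heq0
  have hE := congrArg E heq
  simp only [map_add, map_mul, map_pow, E_X0, E_X1] at hE
  have hst : E s * E t ≠ 0 := by
    simp only [← map_mul]
    exact (map_ne_zero_iff E E.injective).mpr (mul_ne_zero hs0 ht0)
  exact descent (E s * E t).natDegree (E s * E t) le_rfl hst
    (E a * E t) (E b * E s) hE
end

section
/- For all d ∈ F one has d² + d ≠ (t + u)³. -/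
/-!
Write `d = p / q` with polynomials `p, q`, `q ≠ 0`. Then `p (p + q) = (t + u)³ q²`. As polynomials
in `t` over `𝔽₂[u]`, the right-hand side has odd degree `3 + 2 deg q`, while the left-hand side has
degree `2 deg p` if `deg p > deg q` and degree at most `2 deg q` otherwise.
-/

open Polynomial

theorem Polynomial.mul_add_ne_mul_sq_of_odd_natDegree {R : Type*} [CommRing R] [IsDomain R]
    {f : R[X]} (hf : Odd f.natDegree) (p : R[X]) {q : R[X]} (hq : q ≠ 0) :
    p * (p + q) ≠ f * q ^ 2 := by
  intro h
  have hf0 : f ≠ 0 := by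
    rintro rfl
    simp at hf
  have hrhs : f * q ^ 2 ≠ 0 := mul_ne_zero hf0 (pow_ne_zero _ hq)
  have hp : p ≠ 0 := by
    rintro rfl
    exact hrhs (by simpa using h.symm)
  have hpq : p + q ≠ 0 := by
    intro hc
    exact hrhs (by simpa [hc] using h.symm)
  have hdeg : p.natDegree + (p + q).natDegree = f.natDegree + 2 * q.natDegree := by
    have := congrArg natDegree h
    rw [natDegree_mul hp hpq, natDegree_mul hf0 (pow_ne_zero _ hq), natDegree_pow] at this
    omega
  obtain ⟨k, hk⟩ := hf
  rcases le_or_gt p.natDegree q.natDegree with hle | hlt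
  · have := (natDegree_add_le p q).trans (max_le hle le_rfl)
    omega
  · have := natDegree_add_eq_left_of_natDegree_lt hlt
    omega

theorem IsFractionRing.exists_mul_add_eq_mul_sq {A K : Type*} [CommRing A] [Nontrivial A]
    [CommRing K] [Algebra A K] [IsFractionRing A K] {d : K} {a : A} (h : d ^ 2 + d = algebraMap A K a) :
    ∃ p q : A, q ≠ 0 ∧ p * (p + q) = a * q ^ 2 := by
  obtain ⟨⟨p, q⟩, hd⟩ := IsLocalization.surj (nonZeroDivisors A) d
  refine ⟨p, q, nonZeroDivisors.coe_ne_zero q, IsFractionRing.injective A K ?_⟩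
  simp only [map_mul, map_add, map_pow, ← hd, ← h]
  ring

theorem MvPolynomial.finSuccEquiv_X_zero_add_X_one (R : Type*) [CommRing R] :
    finSuccEquiv R 1 (X 0 + X 1) = Polynomial.X + Polynomial.C (X 0) := by
  rw [map_add, show (1 : Fin 2) = Fin.succ 0 from rfl, finSuccEquiv_X_zero, finSuccEquiv_X_succ]

/-- In the rational function field `F = 𝔽₂(t, u)` in two indeterminates over the
field with two elements, `(t + u)³` is not of the form `d² + d` with `d ∈ F`. -/
theorem cube_ne_artinSchreier
    (d : FractionRing (MvPolynomial (Fin 2) (ZMod 2))) :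
    d ^ 2 + d ≠
      (algebraMap (MvPolynomial (Fin 2) (ZMod 2))
          (FractionRing (MvPolynomial (Fin 2) (ZMod 2))) (MvPolynomial.X 0) +
        algebraMap (MvPolynomial (Fin 2) (ZMod 2))
          (FractionRing (MvPolynomial (Fin 2) (ZMod 2))) (MvPolynomial.X 1)) ^ 3 := by
  intro h
  rw [← map_add, ← map_pow] at h
  obtain ⟨p, q, hq, hpq⟩ := IsFractionRing.exists_mul_add_eq_mul_sq h
  have hodd : Odd (MvPolynomial.finSuccEquiv (ZMod 2) 1
      ((MvPolynomial.X 0 + MvPolynomial.X 1) ^ 3)).natDegree := by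
    rw [map_pow, MvPolynomial.finSuccEquiv_X_zero_add_X_one, natDegree_pow, natDegree_X_add_C]
    decide
  refine mul_add_ne_mul_sq_of_odd_natDegree hodd (MvPolynomial.finSuccEquiv (ZMod 2) 1 p)
    ((map_ne_zero_iff _ (MvPolynomial.finSuccEquiv (ZMod 2) 1).injective).2 hq) ?_
  simpa only [map_mul, map_add, map_pow] using congrArg (MvPolynomial.finSuccEquiv (ZMod 2) 1) hpq
end
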